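/- arXiv:2604.21552 — 16 statements merged into one kernel-verified Lean document; each statement's English description precedes it below -/
import Mathlib

section
/- Let n ≥ 1 and let G be a digraph on [n] such that {(i,i+1) : 1 ≤ i ≤ n−1} ⊆ E(G) ⊆ {(i,j) : i ≥ j−1} (a lower Hessenberg pattern with nonzero superdiagonal), and assume that for every k with 2 ≤ k ≤ n the digraph G contains a directed cycle of length k (distinct vertices v₁,…,v_k with arcs (v₁,v₂),…,(v_{k−1},v_k),(v_k,v₁) in E(G)). If G has at least one loop (some vertex v with (v,v) ∈ E(G)), then G requires the nSSP. -/
open Matrix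

/-- `A` has the non-symmetric Strong Spectral Property (nSSP): the only matrix `X`
with `A ∘ X = O` (Hadamard product) and `A Xᵀ - Xᵀ A = O` is `X = O`. -/
def HasNSSP {V : Type*} [Fintype V] (A : Matrix V V ℝ) : Prop :=
  ∀ X : Matrix V V ℝ,
    (∀ i j, A i j * X i j = 0) → A * Xᵀ - Xᵀ * A = 0 → X = 0

/-- `A ∈ M(G)`: the entry `A i j` is nonzero exactly when `(i,j)` is an arc of the digraph. -/
def MemPattern {V : Type*} (E : Set (V × V)) (A : Matrix V V ℝ) : Prop :=
  ∀ i j, A i j ≠ 0 ↔ (i, j) ∈ E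

/-- The digraph with arc set `E` requires the nSSP. -/
def RequiresNSSP {V : Type*} [Fintype V] (E : Set (V × V)) : Prop :=
  ∀ A : Matrix V V ℝ, MemPattern E A → HasNSSP A

/-- The digraph with arc set `E` allows the nSSP. -/
def AllowsNSSP {V : Type*} [Fintype V] (E : Set (V × V)) : Prop :=
  ∃ A : Matrix V V ℝ, MemPattern E A ∧ HasNSSP A

/-- Out-neighbourhood `N⁺_G[v]`. -/
def outNbhd {V : Type*} (E : Set (V × V)) (v : V) : Set V := {u | (v, u) ∈ E}

/-- In-neighbourhood `N⁻_G[v]`. -/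
def inNbhd {V : Type*} (E : Set (V × V)) (v : V) : Set V := {w | (w, v) ∈ E}

/-- The double path `P_{n,L}` on `n` vertices (0-indexed by `Fin n`, so that the
vertex with 1-based label `ℓ` is `⟨ℓ-1, _⟩`), with loops exactly at vertices in `L`. -/
def doublePathE (n : ℕ) (L : Set (Fin n)) : Set (Fin n × Fin n) :=
  {q | q.1.val + 1 = q.2.val ∨ q.2.val + 1 = q.1.val ∨ (q.1 = q.2 ∧ q.1 ∈ L)}

lemma cycle_drop {n : ℕ} (E : Set (Fin n × Fin n)) (k : ℕ) (hk2 : 2 ≤ k)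
    (hhess : ∀ p ∈ E, p.2.val ≤ p.1.val + 1)
    (v : ℕ → Fin n)
    (hinj : ∀ a < k, ∀ b < k, v a = v b → a = b)
    (harc : ∀ i : ℕ, i + 1 < k → (v i, v (i + 1)) ∈ E)
    (hclose : (v (k - 1), v 0) ∈ E) :
    ∃ a b : Fin n, (a, b) ∈ E ∧ (a : ℕ) = (b : ℕ) + (k - 1) := by
  have hk0 : 0 < k := by omega
  have h1k : 1 % k = 1 := Nat.mod_eq_of_lt (by omega)
  have harc' : ∀ i, i < k → (v i, v ((i + 1) % k)) ∈ E := by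
    intro i hi
    rcases Nat.lt_or_ge (i+1) k with h | h
    · rw [Nat.mod_eq_of_lt h]; exact harc i h
    · have hik : i = k - 1 := by omega
      have : (i + 1) % k = 0 := by
        have : i + 1 = k := by omega
        simp [this]
      rw [this, hik]; exact hclose
  obtain ⟨t0, ht0, hmin⟩ := Finset.exists_min_image (Finset.range k)
    (fun i => (v i : ℕ)) ⟨0, Finset.mem_range.mpr hk0⟩
  have ht0k : t0 < k := Finset.mem_range.mp ht0
  have ht0min : ∀ i, i < k → (v t0 : ℕ) ≤ (v i : ℕ) := fun i hi =>
    hmin i (Finset.mem_range.mpr hi)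
  have hval : ∀ j, j < k → (v ((t0 + j) % k) : ℕ) = (v t0 : ℕ) + j := by
    intro j
    induction j using Nat.strong_induction_on with
    | _ j ih =>
      match j with
      | 0 => intro _; simp [Nat.mod_eq_of_lt ht0k]
      | (j+1) =>
        intro hjk
        have hj : j < k := by omega
        have hwj := ih j (by omega) hj
        have hidx : (t0 + j) % k < k := Nat.mod_lt _ hk0
        have harcj := harc' ((t0 + j) % k) hidx
        have hmod : ((t0 + j) % k + 1) % k = (t0 + (j + 1)) % k := by
          rw [show t0 + (j+1) = (t0 + j) + 1 by omega]
          exact (Nat.mod_modEq (t0 + j) k).add_right 1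
        rw [hmod] at harcj
        have hle := hhess _ harcj
        simp only at hle
        have hge := ht0min ((t0 + (j+1)) % k) (Nat.mod_lt _ hk0)
        rw [hwj] at hle
        by_contra hne
        have hm : ∃ m, m ≤ j ∧ (v ((t0 + (j+1)) % k) : ℕ) = (v t0 : ℕ) + m := by
          refine ⟨(v ((t0 + (j+1)) % k) : ℕ) - (v t0 : ℕ), by omega, by omega⟩
        obtain ⟨m, hmj, hmv⟩ := hm
        have hvm := ih m (by omega) (by omega)
        have heq : v ((t0 + (j+1)) % k) = v ((t0 + m) % k) := by
          apply Fin.ext; rw [hmv, hvm]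
        have hidxeq := hinj _ (Nat.mod_lt _ hk0) _ (Nat.mod_lt _ hk0) heq
        have hmeq : (j + 1) % k = m % k := by
          have h0 : (t0 + (j+1)) % k = (t0 + m) % k := hidxeq
          have := Nat.ModEq.add_left_cancel' t0 (h0 : (t0 + (j+1)) ≡ (t0 + m) [MOD k])
          exact this
        rw [Nat.mod_eq_of_lt hjk, Nat.mod_eq_of_lt (by omega : m < k)] at hmeq
        omega
  refine ⟨v ((t0 + (k-1)) % k), v t0, ?_, ?_⟩
  · have h := harc' ((t0 + (k-1)) % k) (Nat.mod_lt _ hk0)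
    have hmod : ((t0 + (k-1)) % k + 1) % k = t0 := by
      have e1 : ((t0 + (k-1)) % k + 1) % k = (t0 + (k-1) + 1) % k :=
        (Nat.mod_modEq (t0 + (k-1)) k).add_right 1
      rw [e1, show t0 + (k-1) + 1 = t0 + k by omega, Nat.add_mod_right,
          Nat.mod_eq_of_lt ht0k]
    rw [hmod] at h
    exact h
  · exact hval (k-1) (by omega)

/-- a lower Hessenberg digraph with full nonzero superdiagonal,
containing a directed cycle of every length `2 ≤ k ≤ n`, and having at least one loop,
requires the nSSP. (Vertices are 0-indexed: `Fin` index `a` is 1-based vertex `a+1`.) -/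
theorem hessenberg_with_loop_requires_nSSP {n : ℕ} (hn : 1 ≤ n)
    (E : Set (Fin n × Fin n))
    (hsup : ∀ i j : Fin n, i.val + 1 = j.val → (i, j) ∈ E)
    (hhess : ∀ p ∈ E, p.2.val ≤ p.1.val + 1)
    (hcyc : ∀ k : ℕ, 2 ≤ k → k ≤ n → ∃ v : ℕ → Fin n,
      (∀ a < k, ∀ b < k, v a = v b → a = b) ∧
      (∀ i : ℕ, i + 1 < k → (v i, v (i + 1)) ∈ E) ∧
      (v (k - 1), v 0) ∈ E)
    (hloop : ∃ w : Fin n, (w, w) ∈ E) :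
    RequiresNSSP E := by
  intro A hA X hX1 hX2
  have hA0 : ∀ i j : Fin n, (i : ℕ) + 1 < (j : ℕ) → A i j = 0 := by
    intro i j hij
    by_contra h
    have := hhess (i, j) ((hA i j).mp h)
    simp only at this
    omega
  have hs : ∀ (q : ℕ) (hq : q + 1 < n), A ⟨q, by omega⟩ ⟨q + 1, hq⟩ ≠ 0 := by
    intro q hq
    exact (hA _ _).mpr (hsup ⟨q, by omega⟩ ⟨q + 1, hq⟩ rfl)
  have hY0 : ∀ i j : Fin n, (i, j) ∈ E → Xᵀ j i = 0 := by
    intro i j h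
    have h2 : A i j ≠ 0 := (hA i j).mpr h
    have h1 := hX1 i j
    rw [Matrix.transpose_apply]
    rcases mul_eq_zero.mp h1 with h' | h'
    · exact absurd h' h2
    · exact h'
  have hC : ∀ i j : Fin n, ∑ k, A i k * Xᵀ k j = ∑ k, Xᵀ i k * A k j := by
    intro i j
    have h : A * Xᵀ = Xᵀ * A := sub_eq_zero.mp hX2
    have h2 : (A * Xᵀ) i j = (Xᵀ * A) i j := by rw [h]
    simpa [Matrix.mul_apply] using h2
  have hmain : ∀ t (p q : Fin n), (p : ℕ) + n ≤ (q : ℕ) + t → Xᵀ p q = 0 := by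
    intro t
    induction t with
    | zero =>
      intro p q h
      exact absurd h (by have := q.isLt; omega)
    | succ t IH =>
      have keyMid : ∀ (p q : ℕ) (hp1 : p + 1 < n) (hq1 : q + 1 < n),
          q + t + 1 = p + n →
          A ⟨p, by omega⟩ ⟨p + 1, hp1⟩ * Xᵀ ⟨p + 1, hp1⟩ ⟨q + 1, hq1⟩
            = Xᵀ ⟨p, by omega⟩ ⟨q, by omega⟩ * A ⟨q, by omega⟩ ⟨q + 1, hq1⟩ := by
        intro p q hp1 hq1 hl
        have h := hC ⟨p, by omega⟩ ⟨q + 1, hq1⟩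
        rw [Finset.sum_eq_single (⟨p + 1, hp1⟩ : Fin n) ?hL1 ?hL2,
            Finset.sum_eq_single (⟨q, by omega⟩ : Fin n) ?hR1 ?hR2] at h
        · exact h
        case hL1 =>
          intro k _ hk
          rcases le_or_gt (k : ℕ) p with h' | h'
          · rw [IH k ⟨q + 1, hq1⟩ (by simp only [Fin.val_mk]; omega), mul_zero]
          · have h'' : p + 1 < (k : ℕ) := by
              rcases Nat.lt_or_ge (p + 1) (k : ℕ) with h'' | h''
              · exact h''
              · exact absurd (Fin.ext (by simp only [Fin.val_mk]; omega :
                  (k : ℕ) = ((⟨p + 1, hp1⟩ : Fin n) : ℕ))) hk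
            rw [hA0 _ _ (by simp only [Fin.val_mk]; omega), zero_mul]
        case hL2 => intro h'; exact absurd (Finset.mem_univ _) h'
        case hR1 =>
          intro k _ hk
          rcases lt_or_ge (k : ℕ) q with h' | h'
          · rw [hA0 _ _ (by simp only [Fin.val_mk]; omega), mul_zero]
          · have h'' : q < (k : ℕ) := by
              rcases Nat.lt_or_ge q (k : ℕ) with h'' | h''
              · exact h''
              · exact absurd (Fin.ext (by simp only [Fin.val_mk]; omega :
                  (k : ℕ) = ((⟨q, by omega⟩ : Fin n) : ℕ))) hk
            rw [IH ⟨p, by omega⟩ k (by simp only [Fin.val_mk]; omega), zero_mul]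
        case hR2 => intro h'; exact absurd (Finset.mem_univ _) h'
      have keyTop : ∀ (q : ℕ) (hq1 : q + 1 < n),
          q + t + 1 = (n - 1) + n → Xᵀ ⟨n - 1, by omega⟩ ⟨q, by omega⟩ = 0 := by
        intro q hq1 hl
        have h := hC ⟨n - 1, by omega⟩ ⟨q + 1, hq1⟩
        rw [Finset.sum_eq_zero ?hz,
            Finset.sum_eq_single (⟨q, by omega⟩ : Fin n) ?hR1 ?hR2] at h
        case hz =>
          intro k _
          rw [IH k ⟨q + 1, hq1⟩ (by have := k.isLt; simp only [Fin.val_mk]; omega), mul_zero]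
        case hR1 =>
          intro k _ hk
          rcases lt_or_ge (k : ℕ) q with h' | h'
          · rw [hA0 _ _ (by simp only [Fin.val_mk]; omega), mul_zero]
          · have h'' : q < (k : ℕ) := by
              rcases Nat.lt_or_ge q (k : ℕ) with h'' | h''
              · exact h''
              · exact absurd (Fin.ext (by simp only [Fin.val_mk]; omega :
                  (k : ℕ) = ((⟨q, by omega⟩ : Fin n) : ℕ))) hk
            rw [IH ⟨n - 1, by omega⟩ k (by simp only [Fin.val_mk]; omega), zero_mul]
        case hR2 => intro h'; exact absurd (Finset.mem_univ _) h'
        rcases mul_eq_zero.mp h.symm with h' | h'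
        · exact h'
        · exact absurd h' (hs q hq1)
      intro p q hpq
      rcases Nat.lt_or_ge ((q : ℕ) + t) ((p : ℕ) + n) with hlt | hge
      swap
      · exact IH p q hge
      have hex : (q : ℕ) + t + 1 = (p : ℕ) + n := by omega
      have finisher : ∀ (b a : Fin n), (a : ℕ) + t + 1 = (b : ℕ) + n →
          Xᵀ b a = 0 → Xᵀ p q = 0 := by
        intro b a hab hseed
        have spreadDown : ∀ d (hbd : (b : ℕ) + d < n) (had : (a : ℕ) + d < n),
            Xᵀ ⟨(b : ℕ) + d, hbd⟩ ⟨(a : ℕ) + d, had⟩ = 0 := by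
          intro d
          induction d with
          | zero => intro _ _; simpa using hseed
          | succ d ihd =>
            intro hbd had
            have h := keyMid ((b : ℕ) + d) ((a : ℕ) + d) hbd had (by omega)
            rw [ihd (by omega) (by omega), zero_mul] at h
            rcases mul_eq_zero.mp h with h' | h'
            · exact absurd h' (hs _ hbd)
            · exact h'
        have spreadUp : ∀ d (p' q' : ℕ) (hp' : p' < n) (hq' : q' < n),
            q' + t + 1 = p' + n → p' + d = (b : ℕ) → q' + d = (a : ℕ) →
            Xᵀ ⟨p', hp'⟩ ⟨q', hq'⟩ = 0 := by
          intro d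
          induction d with
          | zero =>
            intro p' q' hp' hq' _ hpb hqa
            have e1 : (⟨p', hp'⟩ : Fin n) = b := Fin.ext (by simpa using hpb)
            have e2 : (⟨q', hq'⟩ : Fin n) = a := Fin.ext (by simpa using hqa)
            rw [e1, e2]; exact hseed
          | succ d ihd =>
            intro p' q' hp' hq' hl hpb hqa
            have hp1 : p' + 1 < n := by have := b.isLt; omega
            have hq1 : q' + 1 < n := by have := a.isLt; omega
            have h := keyMid p' q' hp1 hq1 hl
            rw [ihd (p' + 1) (q' + 1) hp1 hq1 (by omega) (by omega) (by omega),
                mul_zero] at h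
            rcases mul_eq_zero.mp h.symm with h' | h'
            · exact h'
            · exact absurd h' (hs q' hq1)
        rcases le_or_gt (p : ℕ) (b : ℕ) with h | h
        · exact spreadUp ((b : ℕ) - (p : ℕ)) p q p.isLt q.isLt hex (by omega) (by omega)
        · have h1 : (b : ℕ) + ((p : ℕ) - (b : ℕ)) < n := by have := p.isLt; omega
          have h2 : (a : ℕ) + ((p : ℕ) - (b : ℕ)) < n := by
            have := q.isLt; omega
          have hz := spreadDown ((p : ℕ) - (b : ℕ)) h1 h2
          have e1 : (⟨(b : ℕ) + ((p : ℕ) - (b : ℕ)), h1⟩ : Fin n) = p :=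
            Fin.ext (by simp only [Fin.val_mk]; omega)
          have e2 : (⟨(a : ℕ) + ((p : ℕ) - (b : ℕ)), h2⟩ : Fin n) = q :=
            Fin.ext (by simp only [Fin.val_mk]; omega)
          rwa [e1, e2] at hz
      rcases Nat.lt_or_ge t (n - 1) with h1 | h1
      · obtain ⟨v, hvinj, hvarc, hvclose⟩ := hcyc (n - t) (by omega) (by omega)
        obtain ⟨a, b, hab, hval⟩ := cycle_drop E (n - t) (by omega) hhess v hvinj hvarc hvclose
        exact finisher b a (by omega) (hY0 a b hab)
      rcases Nat.lt_or_ge t n with h2 | h2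
      · obtain ⟨w, hw⟩ := hloop
        exact finisher w w (by omega) (hY0 w w hw)
      · have hq0 : 2 * n - 2 - t + 1 < n := by
          have := p.isLt; have := q.isLt; omega
        have hseed := keyTop (2 * n - 2 - t) hq0 (by have := q.isLt; omega)
        exact finisher ⟨n - 1, by omega⟩ ⟨2 * n - 2 - t, by omega⟩
          (by simp only [Fin.val_mk]; have := q.isLt; omega) hseed
  ext i j
  have h := hmain (2 * n) j i (by have := i.isLt; have := j.isLt; omega)
  rw [Matrix.transpose_apply] at h
  simpa using h
end

section
/- Let G be a digraph on a finite vertex set V and let S ⊆ V be a subset with S ≠ ∅ and V \ S ≠ ∅. Suppose that either every arc of G with tail in S has its head in S (i.e., (u,w) ∈ E(G) and u ∈ S imply w ∈ S), or every arc of G with head in S has its tail in S (i.e., (w,u) ∈ E(G) and u ∈ S imply w ∈ S). If the induced subdigraph H = G[V \ S] (with arc set E(G) ∩ ((V\S) × (V\S))) does not allow the nSSP, then G does not allow the nSSP, i.e., no matrix A ∈ M(G) has the nSSP. -/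
open Matrix

/-!
If no arc leaves `S`, ordering `V` as `S ⊕ Sᶜ` puts `A` in the block form `[[A₁₁, 0], [A₂₁, B]]`
with `B ∈ M(G[V \ S])`. A witness `Y ≠ 0` against the nSSP of `B` extends to the witness
`[[0, Z], [0, c • Y]]` against that of `A` as soon as `(c, Z) ≠ 0` solves the Sylvester equation
`B Zᵀ - Zᵀ A₁₁ = c • Yᵀ A₂₁`, and such a solution exists by counting dimensions.
If no arc enters `S`, transpose.
-/

lemma MemPattern.transpose {V : Type*} {E : Set (V × V)} {A : Matrix V V ℝ}
    (h : MemPattern E A) :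
    MemPattern (Prod.swap ⁻¹' E) Aᵀ :=
  fun i j => h j i

section

variable {m n V W : Type*} [Fintype m] [Fintype n] [Fintype V] [Fintype W]

lemma HasNSSP.transpose {A : Matrix V V ℝ} (h : HasNSSP A) : HasNSSP Aᵀ := by
  intro X hX hcomm
  rw [← transpose_eq_zero]
  refine h Xᵀ (fun i j => hX j i) ?_
  rw [transpose_transpose, ← transpose_eq_zero, transpose_sub, transpose_mul, transpose_mul,
    ← neg_sub, hcomm, neg_zero]

lemma HasNSSP.submatrix_equiv {A : Matrix V V ℝ} (h : HasNSSP A) (e : W ≃ V) :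
    HasNSSP (A.submatrix e e) := by
  intro X hX hcomm
  have hX' : X.submatrix e.symm e.symm = 0 := by
    refine h _ (fun i j => by simpa using hX (e.symm i) (e.symm j)) ?_
    have hA_eq : A = (A.submatrix e e).submatrix e.symm e.symm := by simp
    rw [hA_eq, transpose_submatrix, submatrix_mul_equiv, submatrix_mul_equiv]
    exact congrArg (submatrix · e.symm e.symm) hcomm
  simpa using congrArg (submatrix · e e) hX'

lemma exists_ne_zero_sylvester_eq_smul {K : Type*} [Field K] (B : Matrix n n K)
    (A : Matrix m m K) (C : Matrix n m K) :
    ∃ c : K, ∃ Z : Matrix m n K, (c, Z) ≠ 0 ∧ B * Zᵀ - Zᵀ * A = c • C := by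
  let f : K × Matrix m n K →ₗ[K] Matrix n m K :=
    { toFun := fun p => B * p.2ᵀ - p.2ᵀ * A - p.1 • C
      map_add' := fun p q => by
        simp only [Prod.snd_add, Prod.fst_add, transpose_add, Matrix.mul_add, Matrix.add_mul,
          add_smul]
        abel
      map_smul' := fun a p => by
        simp only [Prod.smul_snd, Prod.smul_fst, transpose_smul, Matrix.mul_smul,
          Matrix.smul_mul, smul_eq_mul, mul_smul, RingHom.id_apply, smul_sub] }
  have hdim : Module.finrank K (Matrix n m K) < Module.finrank K (K × Matrix m n K) := by
    simp [Module.finrank_prod, Module.finrank_matrix, mul_comm]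
  obtain ⟨⟨c, Z⟩, hker, hne⟩ :=
    (Submodule.ne_bot_iff _).mp (LinearMap.ker_ne_bot_of_finrank_lt (f := f) hdim)
  exact ⟨c, Z, hne, sub_eq_zero.mp (LinearMap.mem_ker.mp hker)⟩

lemma not_hasNSSP_fromBlocks_zero₁₂ (A₁₁ : Matrix m m ℝ) (A₂₁ : Matrix n m ℝ)
    {A₂₂ : Matrix n n ℝ} (h : ¬ HasNSSP A₂₂) : ¬ HasNSSP (fromBlocks A₁₁ 0 A₂₁ A₂₂) := by
  obtain ⟨Y, hY, hYcomm, hY0⟩ :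
      ∃ Y, (∀ i j, A₂₂ i j * Y i j = 0) ∧ A₂₂ * Yᵀ - Yᵀ * A₂₂ = 0 ∧ Y ≠ 0 := by
    simpa [HasNSSP] using h
  obtain ⟨c, Z, hcZ, hZ⟩ := exists_ne_zero_sylvester_eq_smul A₂₂ A₁₁ (Yᵀ * A₂₁)
  intro hA
  have hX := hA (fromBlocks 0 Z 0 (c • Y)) ?_ ?_
  · rw [← fromBlocks_zero, fromBlocks_inj] at hX
    obtain ⟨-, hZ0, -, hcY⟩ := hX
    have hc : c = 0 := (smul_eq_zero.mp hcY).resolve_right hY0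
    exact hcZ (Prod.ext hc hZ0)
  · rintro (i | i) (j | j) <;> simp [mul_left_comm _ c, hY]
  · rw [sub_eq_zero, fromBlocks_transpose, fromBlocks_multiply, fromBlocks_multiply]
    simp only [transpose_zero, Matrix.mul_zero, Matrix.zero_mul, add_zero, zero_add, transpose_smul]
    congr 1
    · rw [Matrix.smul_mul, ← hZ, add_sub_cancel]
    · rw [Matrix.mul_smul, Matrix.smul_mul, sub_eq_zero.mp hYcomm]

lemma not_hasNSSP_of_outArcs_closed (S : Set V) [Fintype ↥(Sᶜ : Set V)] (E : Set (V × V))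
    (hout : ∀ u w : V, (u, w) ∈ E → u ∈ S → w ∈ S)
    (hH : ∀ B : Matrix ↥(Sᶜ : Set V) ↥(Sᶜ : Set V) ℝ,
      MemPattern {p : ↥(Sᶜ : Set V) × ↥(Sᶜ : Set V) | ((p.1 : V), (p.2 : V)) ∈ E} B →
      ¬ HasNSSP B)
    {A : Matrix V V ℝ} (hA : MemPattern E A) : ¬ HasNSSP A := by
  classical
  intro hN
  have h := hN.submatrix_equiv (Equiv.Set.sumCompl S)
  rw [← fromBlocks_toBlocks (A.submatrix _ _)] at h
  have h₁₂ : toBlocks₁₂ (A.submatrix (Equiv.Set.sumCompl S) (Equiv.Set.sumCompl S)) = 0 := by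
    ext i j
    by_contra hne
    exact j.2 (hout i j ((hA i j).mp (by simpa [toBlocks₁₂] using hne)) i.2)
  rw [h₁₂] at h
  exact not_hasNSSP_fromBlocks_zero₁₂ _ _ (hH _ fun i j => by simpa [toBlocks₂₂] using hA i j) h

end

theorem not_allow_nSSP_of_induced_general {V : Type*} [Fintype V] (S : Set V)
    [Fintype ↥(Sᶜ : Set V)] (E : Set (V × V))
    (hdir : (∀ u w : V, (u, w) ∈ E → u ∈ S → w ∈ S) ∨
            (∀ u w : V, (w, u) ∈ E → u ∈ S → w ∈ S))
    (hH : ∀ B : Matrix ↥(Sᶜ : Set V) ↥(Sᶜ : Set V) ℝ,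
      MemPattern {p : ↥(Sᶜ : Set V) × ↥(Sᶜ : Set V) | ((p.1 : V), (p.2 : V)) ∈ E} B →
      ¬ HasNSSP B) :
    ∀ A : Matrix V V ℝ, MemPattern E A → ¬ HasNSSP A := by
  intro A hA hN
  rcases hdir with hout | hin
  · exact not_hasNSSP_of_outArcs_closed S E hout hH hA hN
  · exact not_hasNSSP_of_outArcs_closed S (Prod.swap ⁻¹' E) hin
      (fun B hB hBN => hH Bᵀ hB.transpose hBN.transpose) hA.transpose hN.transpose

/-- if all arcs leaving `S` stay in `S`, or all arcs entering `S` come from `S`,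
and the induced subdigraph on `V \ S` does not allow the nSSP, then `G` does not allow the nSSP. -/
theorem not_allow_nSSP_of_induced {V : Type*} [Fintype V] (S : Set V)
    [Fintype ↥(Sᶜ : Set V)] (E : Set (V × V))
    (hS : S.Nonempty) (hSc : (Sᶜ : Set V).Nonempty)
    (hdir : (∀ u w : V, (u, w) ∈ E → u ∈ S → w ∈ S) ∨
            (∀ u w : V, (w, u) ∈ E → u ∈ S → w ∈ S))
    (hH : ∀ B : Matrix ↥(Sᶜ : Set V) ↥(Sᶜ : Set V) ℝ,
      MemPattern {p : ↥(Sᶜ : Set V) × ↥(Sᶜ : Set V) | ((p.1 : V), (p.2 : V)) ∈ E} B →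
      ¬ HasNSSP B) :
    ∀ A : Matrix V V ℝ, MemPattern E A → ¬ HasNSSP A :=
  not_allow_nSSP_of_induced_general S E hdir hH
end

section
/- Let G be a digraph on n ≥ 2 vertices that is not strongly connected, i.e., there exist vertices u, v such that there is no directed walk in G from u to v. Then G does not require the nSSP: there exists a matrix A ∈ M(G) that does not have the nSSP. -/
open Matrix

/-!
Let `S` be the set of vertices reachable from `u`. No arc leaves `S`, so listing `S` first makes
every `A ∈ M(G)` block lower triangular, `A = [A₁ 0; C A₂]`, and any `Y = [0 0; Z 0]` satisfies
`A ∘ Yᵀ = O`; it commutes with `A` as soon as `A₂ Z = Z A₁`, e.g. for `Z = x yᵀ` with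
`A₂ x = λ x` and `yᵀ A₁ = λ yᵀ`. If both `G[S]` and `G[Sᶜ]` contain a cycle, weights that are
stochastic along the vertices reaching the cycle give both blocks the eigenvalue `1`. If `G[Sᶜ]`
is acyclic, `A₂` is nilpotent with zero diagonal: either `A₁` is singular and `λ = 0` works, or
`A₁` is invertible and `Y = [0 0; W I]` works, where `A₂ W - W A₁ = C` is solved by a finite
Neumann series. If `G[S]` is acyclic, the same argument applies to the reversed digraph.
-/
open Matrix Relation

section Basic

variable {m V : Type*} [Fintype m] [Fintype V]

theorem not_hasNSSP_of_commute {A Y : Matrix V V ℝ} (hY : Y ≠ 0)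
    (hsupp : ∀ a b, Y a b ≠ 0 → A b a = 0) (hcomm : A * Y = Y * A) : ¬HasNSSP A := by
  intro hA
  refine hY (transpose_eq_zero.mp (hA Yᵀ (fun i j => ?_) ?_))
  · by_cases hji : Y j i = 0
    · simp [hji]
    · simp [hsupp j i hji]
  · rw [transpose_transpose, hcomm, sub_self]

theorem HasNSSP.of_transpose {A : Matrix V V ℝ} (h : HasNSSP Aᵀ) : HasNSSP A := by
  intro X hAX hcomm
  refine transpose_eq_zero.mp (h Xᵀ (fun i j => hAX j i) ?_)
  rw [transpose_transpose,
    show Aᵀ * X - X * Aᵀ = -(A * Xᵀ - Xᵀ * A)ᵀ by simp [transpose_mul], hcomm]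
  simp

theorem HasNSSP.of_submatrix {A : Matrix m m ℝ} (e : V ≃ m)
    (h : HasNSSP (A.submatrix e e)) : HasNSSP A := by
  intro X hAX hcomm
  have hX : X.submatrix e e = 0 := h _ (fun i j => hAX (e i) (e j)) (by
    rw [transpose_submatrix, submatrix_mul_equiv, submatrix_mul_equiv]
    change (A * Xᵀ - Xᵀ * A).submatrix e e = 0
    rw [hcomm]; rfl)
  ext i j
  simpa using congr_fun₂ hX (e.symm i) (e.symm j)

end Basic

section Pattern

variable {V : Type*}

def IsAcyclic (E : Set (V × V)) : Prop := ∀ w, ¬TransGen (fun a b => (a, b) ∈ E) w w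

def inducedArcs (E : Set (V × V)) (S T : Set V) : Set (S × T) :=
  Prod.map Subtype.val Subtype.val ⁻¹' E

def IsOutClosed (E : Set (V × V)) (S : Set V) : Prop := ∀ i j, (i, j) ∈ E → i ∈ S → j ∈ S

theorem IsAcyclic.swap {E : Set (V × V)} (h : IsAcyclic E) : IsAcyclic (Prod.swap ⁻¹' E) :=
  fun w hw => h w (transGen_swap.mp hw)

theorem exists_matrix_ne_zero_iff {m n : Type*} (P : m → n → Prop) :
    ∃ C : Matrix m n ℝ, ∀ i j, C i j ≠ 0 ↔ P i j := by
  classical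
  exact ⟨of fun i j => if P i j then 1 else 0, fun i j => by by_cases h : P i j <;> simp [h]⟩

theorem exists_memPattern (E : Set (V × V)) : ∃ A : Matrix V V ℝ, MemPattern E A :=
  exists_matrix_ne_zero_iff fun i j => (i, j) ∈ E

theorem IsAcyclic.apply_self_eq_zero {E : Set (V × V)} {A : Matrix V V ℝ} (hE : IsAcyclic E)
    (hA : MemPattern E A) (i : V) :
    A i i = 0 :=
  not_not.mp fun h => hE i (.single ((hA i i).mp h))

theorem MemPattern.transpose_of_swap {E : Set (V × V)} {A : Matrix V V ℝ}
    (h : MemPattern (Prod.swap ⁻¹' E) A) : MemPattern E Aᵀ :=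
  fun i j => h j i

end Pattern

section Nilpotent

variable {V R : Type*} [Fintype V] [DecidableEq V] [Semiring R]

theorem pow_apply_eq_zero_of_lt_add {M : Matrix V V R} (b : V → ℕ)
    (hb : ∀ i j, M i j ≠ 0 → b j < b i) (k : ℕ) :
    ∀ i j, b i < b j + k → (M ^ k) i j = 0 := by
  induction k with
  | zero => exact fun i j hij => one_apply_ne (by rintro rfl; omega)
  | succ k ih =>
    intro i j hij
    rw [pow_succ, mul_apply]
    refine Finset.sum_eq_zero fun c _ => ?_
    by_cases hcj : M c j = 0
    · rw [hcj, mul_zero]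
    · rw [ih i c (by have := hb c j hcj; omega), zero_mul]

theorem pow_eq_zero_of_lt {M : Matrix V V R} (b : V → ℕ) (hb : ∀ i j, M i j ≠ 0 → b j < b i)
    {k : ℕ} (hk : ∀ i, b i < k) : M ^ k = 0 := by
  ext i j
  exact pow_apply_eq_zero_of_lt_add b hb k i j (by have := hk i; omega)

end Nilpotent

section Acyclic

variable {V : Type*} [Fintype V] [DecidableEq V] {E : Set (V × V)} {A : Matrix V V ℝ}

/-- The number of vertices reachable from a vertex drops strictly along every arc. -/
theorem IsAcyclic.pow_card_eq_zero (hE : IsAcyclic E) (hA : MemPattern E A) :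
    A ^ Fintype.card V = 0 := by
  classical
  let R : V → V → Prop := fun a b => (a, b) ∈ E
  let reach : V → Finset V := fun i => {j | TransGen R i j}
  refine pow_eq_zero_of_lt (fun i => (reach i).card) (fun i j hij => ?_) fun i => ?_
  · have hR : R i j := (hA i j).mp hij
    refine Finset.card_lt_card (Finset.ssubset_iff_of_subset ?_ |>.mpr ⟨j, ?_, ?_⟩)
    · intro c hc
      simpa [reach] using TransGen.head hR (by simpa [reach] using hc)
    · simpa [reach] using TransGen.single hR
    · simpa [reach] using hE j
  · exact Finset.card_lt_univ_of_notMem (x := i) (by simpa [reach] using hE i)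

end Acyclic

section Cycle

variable {V : Type*} [Fintype V] {E : Set (V × V)}

/-- Weighting the arcs into `U` by the reciprocal out-degree into `U` makes the rows of `U`
stochastic on `U`, while rows outside `U` see no arc into `U`. -/
theorem exists_memPattern_mulVec_indicator {U : Set V} (hin : ∀ i j, (i, j) ∈ E → j ∈ U → i ∈ U)
    (hout : ∀ i ∈ U, ∃ j ∈ U, (i, j) ∈ E) :
    ∃ A : Matrix V V ℝ, MemPattern E A ∧ A *ᵥ U.indicator 1 = U.indicator 1 := by
  classical
  let d : V → ℕ := fun i => (Finset.univ.filter fun j => j ∈ U ∧ (i, j) ∈ E).card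
  have hd : ∀ i, d i ≠ 0 ↔ ∃ j ∈ U, (i, j) ∈ E := fun i => by simp [d]
  let A : Matrix V V ℝ := of fun i j => if (i, j) ∈ E then if j ∈ U then (d i : ℝ)⁻¹ else 1 else 0
  refine ⟨A, fun i j => ?_, funext fun i => ?_⟩
  · by_cases hij : (i, j) ∈ E
    · by_cases hj : j ∈ U
      · simp [A, hij, hj, (hd i).mpr ⟨j, hj, hij⟩]
      · simp [A, hij, hj]
    · simp [A, hij]
  · have hterm : ∀ j, A i j * U.indicator 1 j = if j ∈ U ∧ (i, j) ∈ E then (d i : ℝ)⁻¹ else 0 :=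
      fun j => by by_cases hj : j ∈ U <;> by_cases hij : (i, j) ∈ E <;> simp [A, hj, hij]
    rw [mulVec, dotProduct, Finset.sum_congr rfl fun j _ => hterm j, ← Finset.sum_filter,
      Finset.sum_const, nsmul_eq_mul]
    by_cases hi : i ∈ U
    · simp [hi, d, (hd i).mpr (hout i hi)]
    · have : d i = 0 := not_not.mp fun h => hi (by
        obtain ⟨j, hj, hij⟩ := (hd i).mp h
        exact hin i j hij hj)
      simp [hi, d, this]

theorem exists_memPattern_mulVec_eq_self_of_not_isAcyclic (h : ¬IsAcyclic E) :
    ∃ A : Matrix V V ℝ, MemPattern E A ∧ ∃ x ≠ 0, A *ᵥ x = x := by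
  obtain ⟨w, hw⟩ := not_forall_not.mp h
  let U : Set V := {i | ReflTransGen (fun a b => (a, b) ∈ E) i w}
  have hout : ∀ i ∈ U, ∃ j ∈ U, (i, j) ∈ E := fun i hi => by
    rcases hi.cases_head with rfl | ⟨j, hij, hj⟩
    · obtain ⟨j, hij, hj⟩ := TransGen.head'_iff.mp hw
      exact ⟨j, hj, hij⟩
    · exact ⟨j, hj, hij⟩
  obtain ⟨A, hA, hAU⟩ := exists_memPattern_mulVec_indicator (U := U)
    (fun i j hij hj => ReflTransGen.head hij hj) hout
  have hwU : w ∈ U := .refl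
  refine ⟨A, hA, U.indicator 1, fun h0 => ?_, hAU⟩
  simpa [hwU] using congr_fun h0 w

theorem exists_memPattern_vecMul_eq_self_of_not_isAcyclic (h : ¬IsAcyclic E) :
    ∃ A : Matrix V V ℝ, MemPattern E A ∧ ∃ y ≠ 0, y ᵥ* A = y := by
  obtain ⟨A, hA, y, hy, hAy⟩ := exists_memPattern_mulVec_eq_self_of_not_isAcyclic
    (E := Prod.swap ⁻¹' E) fun hs => h hs.swap
  exact ⟨Aᵀ, hA.transpose_of_swap, y, hy, by rwa [vecMul_transpose]⟩

end Cycle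

section Blocks

variable {m n : Type*} [Fintype m] [Fintype n] [DecidableEq m] [DecidableEq n]

theorem exists_mul_sub_mul_eq_of_pow_eq_zero {R : Type*} [CommRing R] {N : Matrix n n R}
    {A : Matrix m m R} (C : Matrix n m R) {k : ℕ} (hN : N ^ k = 0) (hA : IsUnit A.det) :
    ∃ W : Matrix n m R, N * W - W * A = C := by
  let f : ℕ → Matrix n m R := fun j => N ^ j * C * A⁻¹ ^ j
  have hN' : ∀ j, N * (N ^ j * C * A⁻¹ ^ (j + 1)) = f (j + 1) := fun j => by
    simp only [f, pow_succ', Matrix.mul_assoc]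
  have hA' : ∀ j, N ^ j * C * A⁻¹ ^ (j + 1) * A = f j := fun j => by
    simp only [f, pow_succ, Matrix.mul_assoc, nonsing_inv_mul _ hA, Matrix.mul_one]
  refine ⟨-∑ j ∈ Finset.range k, N ^ j * C * A⁻¹ ^ (j + 1), ?_⟩
  rw [Matrix.mul_neg, Matrix.neg_mul, Matrix.mul_sum, Matrix.sum_mul, neg_sub_neg]
  simp only [hN', hA']
  rw [← Finset.sum_sub_distrib, Finset.sum_range_sub']
  simp [f, hN]

theorem not_hasNSSP_fromBlocks_of_eigenvectors {A₁ : Matrix m m ℝ} {A₂ : Matrix n n ℝ}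
    (C : Matrix n m ℝ) {x : n → ℝ} {y : m → ℝ} {t : ℝ} (hx : x ≠ 0) (hy : y ≠ 0)
    (hAx : A₂ *ᵥ x = t • x) (hyA : y ᵥ* A₁ = t • y) :
    ¬HasNSSP (fromBlocks A₁ 0 C A₂) := by
  have hZ : A₂ * vecMulVec x y = vecMulVec x y * A₁ := by
    rw [mul_vecMulVec, vecMulVec_mul, hAx, hyA, smul_vecMulVec, vecMulVec_smul]
  refine not_hasNSSP_of_commute (Y := fromBlocks 0 0 (vecMulVec x y) 0) (fun hY => ?_) ?_ ?_
  · obtain ⟨i, hi⟩ := Function.ne_iff.mp hx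
    obtain ⟨j, hj⟩ := Function.ne_iff.mp hy
    exact mul_ne_zero hi hj (by simpa [vecMulVec_apply] using congr_fun₂ hY (.inr i) (.inl j))
  · rintro (a | a) (b | b) hab <;> simp_all
  · simp [fromBlocks_multiply, hZ]

theorem not_hasNSSP_fromBlocks_of_mul_sub_mul_eq [Nonempty n] {A₁ : Matrix m m ℝ}
    {A₂ : Matrix n n ℝ} {C W : Matrix n m ℝ} (hA₂ : ∀ i, A₂ i i = 0) (h : A₂ * W - W * A₁ = C) :
    ¬HasNSSP (fromBlocks A₁ 0 C A₂) := by
  refine not_hasNSSP_of_commute (Y := fromBlocks 0 0 W 1) (fun hY => ?_) ?_ ?_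
  · obtain ⟨i⟩ := ‹Nonempty n›
    simpa using congr_fun₂ hY (.inr i) (.inr i)
  · rintro (a | a) (b | b) hab
    · simp at hab
    · simp at hab
    · simp
    · obtain rfl : a = b := by simpa [one_apply] using hab
      simpa using hA₂ a
  · simp [fromBlocks_multiply, ← h]

end Blocks

section Assembly

variable {V : Type*} {E : Set (V × V)} {S : Set V}

theorem memPattern_submatrix_fromBlocks [DecidablePred (· ∈ S)] (hS : IsOutClosed E S)
    {A₁ : Matrix S S ℝ} {C : Matrix ↥Sᶜ S ℝ} {A₂ : Matrix ↥Sᶜ ↥Sᶜ ℝ}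
    (h₁ : MemPattern (inducedArcs E S S) A₁) (hC : ∀ i j, C i j ≠ 0 ↔ (i, j) ∈ inducedArcs E Sᶜ S)
    (h₂ : MemPattern (inducedArcs E Sᶜ Sᶜ) A₂) :
    MemPattern E ((fromBlocks A₁ 0 C A₂).submatrix (Equiv.Set.sumCompl S).symm
      (Equiv.Set.sumCompl S).symm) := by
  intro i j
  by_cases hi : i ∈ S <;> by_cases hj : j ∈ S <;>
    simp only [submatrix_apply, Equiv.Set.sumCompl_symm_apply_of_mem, hi, hj,
      Equiv.Set.sumCompl_symm_apply_of_notMem, not_false_eq_true, fromBlocks_apply₁₁,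
      fromBlocks_apply₁₂, fromBlocks_apply₂₁, fromBlocks_apply₂₂]
  · exact h₁ ⟨i, hi⟩ ⟨j, hj⟩
  · exact ⟨fun h => (h (zero_apply _ _)).elim, fun hij => (hj (hS i j hij hi)).elim⟩
  · exact hC ⟨i, hi⟩ ⟨j, hj⟩
  · exact h₂ ⟨i, hi⟩ ⟨j, hj⟩

variable [Fintype V]

theorem exists_memPattern_not_hasNSSP_of_fromBlocks [DecidablePred (· ∈ S)]
    (hS : IsOutClosed E S) {A₁ : Matrix S S ℝ} {C : Matrix ↥Sᶜ S ℝ} {A₂ : Matrix ↥Sᶜ ↥Sᶜ ℝ}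
    (h₁ : MemPattern (inducedArcs E S S) A₁) (hC : ∀ i j, C i j ≠ 0 ↔ (i, j) ∈ inducedArcs E Sᶜ S)
    (h₂ : MemPattern (inducedArcs E Sᶜ Sᶜ) A₂) (hA : ¬HasNSSP (fromBlocks A₁ 0 C A₂)) :
    ∃ A : Matrix V V ℝ, MemPattern E A ∧ ¬HasNSSP A :=
  ⟨_, memPattern_submatrix_fromBlocks hS h₁ hC h₂, fun h => hA (h.of_submatrix _)⟩

theorem exists_memPattern_not_hasNSSP_of_isAcyclic_compl (hS : IsOutClosed E S)
    (hSc : Sᶜ.Nonempty) (hac : IsAcyclic (inducedArcs E Sᶜ Sᶜ)) :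
    ∃ A : Matrix V V ℝ, MemPattern E A ∧ ¬HasNSSP A := by
  classical
  obtain ⟨A₁, h₁⟩ := exists_memPattern (inducedArcs E S S)
  obtain ⟨C, hC⟩ := exists_matrix_ne_zero_iff fun i j => (i, j) ∈ inducedArcs E Sᶜ S
  obtain ⟨A₂, h₂⟩ := exists_memPattern (inducedArcs E Sᶜ Sᶜ)
  have : Nonempty ↥Sᶜ := hSc.to_subtype
  refine exists_memPattern_not_hasNSSP_of_fromBlocks hS h₁ hC h₂ ?_
  have hN : A₂ ^ Fintype.card ↥Sᶜ = 0 := hac.pow_card_eq_zero h₂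
  by_cases hdet : A₁.det = 0
  · obtain ⟨y, hy, hyA⟩ := exists_vecMul_eq_zero_iff.mpr hdet
    have hdet₂ : A₂.det = 0 := eq_zero_of_pow_eq_zero (by rw [← det_pow, hN, det_zero])
    obtain ⟨x, hx, hAx⟩ := exists_mulVec_eq_zero_iff.mpr hdet₂
    exact not_hasNSSP_fromBlocks_of_eigenvectors C (t := 0) hx hy (by simpa) (by simpa)
  · obtain ⟨W, hW⟩ := exists_mul_sub_mul_eq_of_pow_eq_zero C hN (isUnit_iff_ne_zero.mpr hdet)
    exact not_hasNSSP_fromBlocks_of_mul_sub_mul_eq (hac.apply_self_eq_zero h₂) hW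

theorem exists_memPattern_not_hasNSSP_of_not_isAcyclic (hS : IsOutClosed E S)
    (h₁ : ¬IsAcyclic (inducedArcs E S S)) (h₂ : ¬IsAcyclic (inducedArcs E Sᶜ Sᶜ)) :
    ∃ A : Matrix V V ℝ, MemPattern E A ∧ ¬HasNSSP A := by
  classical
  obtain ⟨A₁, hA₁, y, hy, hyA⟩ := exists_memPattern_vecMul_eq_self_of_not_isAcyclic h₁
  obtain ⟨C, hC⟩ := exists_matrix_ne_zero_iff fun i j => (i, j) ∈ inducedArcs E Sᶜ S
  obtain ⟨A₂, hA₂, x, hx, hAx⟩ := exists_memPattern_mulVec_eq_self_of_not_isAcyclic h₂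
  refine exists_memPattern_not_hasNSSP_of_fromBlocks hS hA₁ hC hA₂ ?_
  exact not_hasNSSP_fromBlocks_of_eigenvectors C (t := 1) hx hy (by simpa) (by simpa)

theorem exists_memPattern_not_hasNSSP_of_isOutClosed (hS : IsOutClosed E S)
    (hSne : S.Nonempty) (hSc : Sᶜ.Nonempty) :
    ∃ A : Matrix V V ℝ, MemPattern E A ∧ ¬HasNSSP A := by
  by_cases hac₂ : IsAcyclic (inducedArcs E Sᶜ Sᶜ)
  · exact exists_memPattern_not_hasNSSP_of_isAcyclic_compl hS hSc hac₂
  by_cases hac₁ : IsAcyclic (inducedArcs E S S)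
  · obtain ⟨A, hA, hnA⟩ := exists_memPattern_not_hasNSSP_of_isAcyclic_compl
      (E := Prod.swap ⁻¹' E) (S := Sᶜ) (fun i j hij hi hj => hi (hS j i hij hj))
      (by rwa [compl_compl]) (by rw [compl_compl]; exact hac₁.swap)
    exact ⟨Aᵀ, hA.transpose_of_swap, fun h => hnA h.of_transpose⟩
  · exact exists_memPattern_not_hasNSSP_of_not_isAcyclic hS hac₁ hac₂

end Assembly

theorem not_strongly_connected_not_require_nSSP_general {n : ℕ}
    (E : Set (Fin n × Fin n)) (u v : Fin n)
    (hwalk : ¬ Relation.ReflTransGen (fun a b : Fin n => (a, b) ∈ E) u v) :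
    ∃ A : Matrix (Fin n) (Fin n) ℝ, MemPattern E A ∧ ¬ HasNSSP A :=
  exists_memPattern_not_hasNSSP_of_isOutClosed (S := {w | ReflTransGen (fun a b => (a, b) ∈ E) u w})
    (fun _ _ hij hi => hi.tail hij) ⟨u, .refl⟩ ⟨v, hwalk⟩

/-- a digraph on `n ≥ 2` vertices that is not strongly connected
(there is no directed walk from `u` to `v`) does not require the nSSP. -/
theorem not_strongly_connected_not_require_nSSP {n : ℕ} (hn : 2 ≤ n)
    (E : Set (Fin n × Fin n)) (u v : Fin n)
    (hwalk : ¬ Relation.ReflTransGen (fun a b : Fin n => (a, b) ∈ E) u v) :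
    ∃ A : Matrix (Fin n) (Fin n) ℝ, MemPattern E A ∧ ¬ HasNSSP A :=
  not_strongly_connected_not_require_nSSP_general E u v hwalk
end

section
/- Let G be a digraph on n ≥ 2 vertices with no double arcs between distinct vertices, i.e., there is no pair of distinct vertices u ≠ v with both (u,v) ∈ E(G) and (v,u) ∈ E(G). Then G does not require the nSSP: there exists a matrix A ∈ M(G) that does not have the nSSP. -/
open Matrix

/-- a digraph on `n ≥ 2` vertices with no double arcs between distinct
vertices does not require the nSSP. -/
theorem no_double_arcs_not_require_nSSP {n : ℕ} (hn : 2 ≤ n)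
    (E : Set (Fin n × Fin n))
    (hnd : ∀ u v : Fin n, u ≠ v → (u, v) ∈ E → (v, u) ∉ E) :
    ∃ A : Matrix (Fin n) (Fin n) ℝ, MemPattern E A ∧ ¬ HasNSSP A := by
  classical
  set A : Matrix (Fin n) (Fin n) ℝ :=
    Matrix.of (fun i j => if (i, j) ∈ E then (if i = j then -1 else 1) else 0) with hA
  have hAval : ∀ i j, A i j = if (i, j) ∈ E then (if i = j then -1 else 1) else 0 := by
    intro i j; rfl
  have hmem : MemPattern E A := by
    intro i j
    rw [hAval]
    split_ifs with h h2 <;> simp [h]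
  refine ⟨A, hmem, ?_⟩
  intro hSSP
  by_cases hP : (∀ i : Fin n, (i, i) ∈ E) ∧ ∀ i j : Fin n, i ≠ j → (i, j) ∉ E
  · -- A = -1 • 1
    have hAeq : A = (-1 : ℝ) • (1 : Matrix (Fin n) (Fin n) ℝ) := by
      ext i j
      rw [hAval]
      by_cases hij : i = j
      · subst hij; simp [hP.1 i]
      · simp [hij, hP.2 i j hij, Matrix.one_apply_ne hij]
    set i0 : Fin n := ⟨0, by omega⟩ with hi0
    set i1 : Fin n := ⟨1, by omega⟩ with hi1
    have h01 : i0 ≠ i1 := by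
      intro h
      have := congrArg Fin.val h
      simp [hi0, hi1] at this
    set X : Matrix (Fin n) (Fin n) ℝ := Matrix.single i0 i1 1 with hX
    have hXoff : ∀ i j : Fin n, i = j → X i j = 0 := by
      intro i j hij
      subst hij
      rw [hX]
      apply Matrix.single_apply_of_ne
      intro h
      exact h01 (h.1.trans h.2.symm)
    have hHad : ∀ i j, A i j * X i j = 0 := by
      intro i j
      by_cases hij : i = j
      · rw [hXoff i j hij, mul_zero]
      · have : A i j = 0 := by
          rw [hAval]; simp [hP.2 i j hij]
        rw [this, zero_mul]
    have hComm : A * Xᵀ - Xᵀ * A = 0 := by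
      rw [hAeq]
      simp [Matrix.smul_mul, Matrix.mul_smul]
    have := hSSP X hHad hComm
    have : X i0 i1 = 0 := by rw [this]; rfl
    rw [hX, Matrix.single_apply_same] at this
    exact one_ne_zero this
  · rw [not_and_or] at hP
    push_neg at hP
    set X : Matrix (Fin n) (Fin n) ℝ := Aᵀ + 1 with hX
    have hXval : ∀ i j, X i j = A j i + (if i = j then (1:ℝ) else 0) := by
      intro i j
      rw [hX]
      simp [Matrix.transpose_apply, Matrix.one_apply, eq_comm]
    have hHad : ∀ i j, A i j * X i j = 0 := by
      intro i j
      rw [hXval]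
      by_cases hij : i = j
      · subst hij
        simp only [if_pos rfl]
        rw [hAval]
        by_cases h : (i, i) ∈ E <;> simp [h]
      · simp only [if_neg hij, add_zero]
        by_cases h : (i, j) ∈ E
        · have : A j i = 0 := by
            rw [hAval]
            simp [hnd i j hij h]
          rw [this, mul_zero]
        · have : A i j = 0 := by rw [hAval]; simp [h]
          rw [this, zero_mul]
    have hComm : A * Xᵀ - Xᵀ * A = 0 := by
      rw [hX]
      simp only [Matrix.transpose_add, Matrix.transpose_transpose, Matrix.transpose_one]
      rw [Matrix.mul_add, Matrix.add_mul, Matrix.mul_one, Matrix.one_mul]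
      abel
    have hX0 := hSSP X hHad hComm
    rcases hP with ⟨i, hi⟩ | ⟨i, j, hij, hE⟩
    · have : X i i = 0 := by rw [hX0]; rfl
      rw [hXval, if_pos rfl, hAval] at this
      simp [hi] at this
    · have : X j i = 0 := by rw [hX0]; rfl
      rw [hXval, if_neg (Ne.symm hij), add_zero, hAval] at this
      simp [hE, hij] at this
end

section
/- Let m ≥ 2 and let G be a digraph on vertex set [2m] whose arc set consists exactly of: the loops (i,i) for all i ∈ [m] (and no loops on vertices m+1,…,2m); the arcs (m+i, i) for all i ∈ [m]; the arcs (i, m+σ(i)) for all i ∈ [m], where σ(i) = i+1 for i < m and σ(m) = 1; together with an arbitrary additional subset of arcs from {(i, m+j) : i, j ∈ [m]} subject to the condition that if (i, m+j) ∈ E(G) for some i ≠ j in [m], then (j, m+i) ∉ E(G). Then G does not require the nSSP: there exists a matrix A ∈ M(G) that does not have the nSSP. -/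
open Matrix

open Classical in
noncomputable def auxB (m : ℕ) (E : Set (Fin (2*m) × Fin (2*m))) : Matrix (Fin m) (Fin m) ℝ :=
  fun i j =>
    if ((⟨i.val, by have := i.isLt; omega⟩ : Fin (2*m)),
        (⟨m + j.val, by have := j.isLt; omega⟩ : Fin (2*m))) ∈ E
    then (if j.val = (i.val + 1) % m ∨ i = j then 1 else (2*(m:ℝ)+2)⁻¹) else 0

def auxE (m : ℕ) : Fin m ⊕ Fin m ≃ Fin (2*m) :=
  finSumFinEquiv.trans (finCongr (by omega))

lemma auxE_inl {m : ℕ} (a : Fin m) :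
    auxE m (Sum.inl a) = (⟨a.val, by have := a.isLt; omega⟩ : Fin (2*m)) := by
  apply Fin.ext; simp [auxE]

lemma auxE_inr {m : ℕ} (a : Fin m) :
    auxE m (Sum.inr a) = (⟨m + a.val, by have := a.isLt; omega⟩ : Fin (2*m)) := by
  apply Fin.ext; simp [auxE]; omega


/-- the bipartite-like family of Theorem "does not require"(C).
Vertices are 0-indexed: `Fin` index `a` is 1-based vertex `a+1`; so the 1-based vertex
set `[m]` is `{a | a.val < m}` and `m + j` (1-based, `j ∈ [m]`) is index `m + (j-1)`. -/
theorem bipartite_family_not_require_nSSP {m : ℕ} (hm : 2 ≤ m)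
    (E : Set (Fin (2 * m) × Fin (2 * m)))
    (hloops : ∀ i : Fin (2 * m), ((i, i) ∈ E ↔ i.val < m))
    (hdown : ∀ t : ℕ, ∀ ht : t < m,
      ((⟨m + t, by omega⟩ : Fin (2 * m)), (⟨t, by omega⟩ : Fin (2 * m))) ∈ E)
    (hshift : ∀ t : ℕ, ∀ ht : t < m,
      ((⟨t, by omega⟩ : Fin (2 * m)),
       (⟨m + (t + 1) % m, by
          have := Nat.mod_lt (t + 1) (show 0 < m by omega); omega⟩ : Fin (2 * m))) ∈ E)
    (hstruct : ∀ p ∈ E,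
      (p.1 = p.2 ∧ p.1.val < m) ∨
      (m ≤ p.1.val ∧ p.2.val + m = p.1.val) ∨
      (p.1.val < m ∧ m ≤ p.2.val))
    (hanti : ∀ i j : ℕ, ∀ hi : i < m, ∀ hj : j < m, i ≠ j →
      ((⟨i, by omega⟩ : Fin (2 * m)), (⟨m + j, by omega⟩ : Fin (2 * m))) ∈ E →
      ((⟨j, by omega⟩ : Fin (2 * m)), (⟨m + i, by omega⟩ : Fin (2 * m))) ∉ E) :
    ∃ A : Matrix (Fin (2 * m)) (Fin (2 * m)) ℝ, MemPattern E A ∧ ¬ HasNSSP A := by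
  rcases lt_or_eq_of_le hm with hm3 | hm2
  case inr =>
    -- m = 2 : hypotheses are contradictory
    exfalso
    subst hm2
    have h1 := hshift 0 (by omega)
    have h2 := hshift 1 (by omega)
    exact hanti 0 1 (by omega) (by omega) (by omega) h1 h2
  -- main case : m ≥ 3
  have hm0 : 0 < m := by omega
  set ε : ℝ := (2*(m:ℝ)+2)⁻¹ with hεdef
  have hε0 : 0 < ε := by positivity
  have hε1 : ε ≤ 1 := by
    rw [hεdef]
    rw [inv_le_one_iff₀]
    right
    have : (1:ℝ) ≤ (m:ℝ) := by exact_mod_cast (show 1 ≤ m by omega)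
    linarith
  set e := auxE m with he
  set B := auxB m E with hB
  set S := B * B - B with hS
  -- basic value facts about B
  have hBval1 : ∀ i j : Fin m,
      ((⟨i.val, by have := i.isLt; omega⟩ : Fin (2*m)),
       (⟨m + j.val, by have := j.isLt; omega⟩ : Fin (2*m))) ∈ E →
      (j.val = (i.val + 1) % m ∨ i = j) → B i j = 1 := by
    intro i j h1 h2
    rw [hB]; unfold auxB
    rw [if_pos h1, if_pos h2]
  have hB_ne : ∀ i j : Fin m, B i j ≠ 0 ↔
      ((⟨i.val, by have := i.isLt; omega⟩ : Fin (2*m)),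
       (⟨m + j.val, by have := j.isLt; omega⟩ : Fin (2*m))) ∈ E := by
    intro i j
    rw [hB]; unfold auxB
    split_ifs with h1 h2
    · simpa using h1
    · constructor
      · intro _; exact h1
      · intro _; positivity
    · simpa using h1
  have hBdiag : ∀ i : Fin m, B i i = 0 ∨ B i i = 1 := by
    intro i
    by_cases h : B i i = 0
    · exact Or.inl h
    · refine Or.inr (hBval1 i i ((hB_ne i i).mp h) (Or.inr rfl))
  have hBabs : ∀ i j : Fin m, |B i j| ≤ 1 := by
    intro i j
    rw [hB]; unfold auxB
    split_ifs
    · simp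
    · rw [abs_of_pos hε0]; exact hε1
    · simp
  have hBeps : ∀ i j : Fin m, ¬(j.val = (i.val + 1) % m ∨ i = j) → |B i j| ≤ ε := by
    intro i j h
    rw [hB]; unfold auxB
    split_ifs with h1
    · rw [abs_of_pos hε0]
    · rw [abs_zero]; exact hε0.le
  -- antisymmetry: off-diagonal products vanish
  have hoff : ∀ i k : Fin m, k ≠ i → B i k * B k i = 0 := by
    intro i k hki
    by_cases h1 : B i k = 0
    · rw [h1, zero_mul]
    by_cases h2 : B k i = 0
    · rw [h2, mul_zero]
    exfalso
    have e1 := (hB_ne i k).mp h1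
    have e2 := (hB_ne k i).mp h2
    exact hanti i.val k.val i.isLt k.isLt (fun hv => hki (Fin.ext hv.symm)) e1 e2
  -- diagonal of S vanishes
  have hSdiag : ∀ i : Fin m, S i i = 0 := by
    intro i
    rw [hS, Matrix.sub_apply, Matrix.mul_apply]
    rw [Finset.sum_eq_single_of_mem i (Finset.mem_univ i)
      (fun k _ hk => hoff i k hk)]
    rcases hBdiag i with h | h <;> rw [h] <;> ring
  -- S commutes with B
  have hcomm : B * S = S * B := by
    rw [hS, mul_sub, sub_mul, ← mul_assoc]
  -- block matrices
  set A₀ : Matrix (Fin m ⊕ Fin m) (Fin m ⊕ Fin m) ℝ := fromBlocks 1 B 1 0 with hA0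
  set Y₀ : Matrix (Fin m ⊕ Fin m) (Fin m ⊕ Fin m) ℝ := fromBlocks S 0 0 S with hY0
  have hAY : A₀ * Y₀ = Y₀ * A₀ := by
    rw [hA0, hY0, fromBlocks_multiply, fromBlocks_multiply]
    simp [hcomm]
  refine ⟨A₀.submatrix e.symm e.symm, ?_, ?_⟩
  · -- MemPattern
    intro i j
    obtain ⟨p, rfl⟩ := e.surjective i
    obtain ⟨q, rfl⟩ := e.surjective j
    rw [Matrix.submatrix_apply, e.symm_apply_apply, e.symm_apply_apply]
    rcases p with a | a <;> rcases q with b | b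
    · -- inl inl
      rw [show A₀ (Sum.inl a) (Sum.inl b) = (1 : Matrix (Fin m) (Fin m) ℝ) a b from rfl]
      constructor
      · intro h
        have hab : a = b := by
          by_contra hne
          exact h (Matrix.one_apply_ne hne)
        subst hab
        have : (e (Sum.inl a)).val < m := by rw [he, auxE_inl]; exact a.isLt
        exact (hloops (e (Sum.inl a))).mpr this
      · intro harc
        rcases hstruct _ harc with ⟨h1, _⟩ | ⟨h1, _⟩ | ⟨_, h1⟩
        · have hab : a = b := by
            have := congrArg Fin.val h1
            rw [he, auxE_inl, auxE_inl] at this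
            exact Fin.ext this
          subst hab
          rw [Matrix.one_apply_eq]; norm_num
        · rw [he, auxE_inl] at h1
          exact absurd h1 (Nat.not_le.mpr a.isLt)
        · rw [he, auxE_inl] at h1
          exact absurd h1 (Nat.not_le.mpr b.isLt)
    · -- inl inr : B block
      rw [show A₀ (Sum.inl a) (Sum.inr b) = B a b from rfl]
      rw [he, auxE_inl, auxE_inr]
      exact hB_ne a b
    · -- inr inl
      rw [show A₀ (Sum.inr a) (Sum.inl b) = (1 : Matrix (Fin m) (Fin m) ℝ) a b from rfl]
      constructor
      · intro h
        have hab : a = b := by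
          by_contra hne
          exact h (Matrix.one_apply_ne hne)
        subst hab
        rw [he, auxE_inr, auxE_inl]
        exact hdown a.val a.isLt
      · intro harc
        rcases hstruct _ harc with ⟨h1, h2⟩ | ⟨h1, h2⟩ | ⟨h1, _⟩
        · rw [he, auxE_inr] at h2
          exact absurd h2 (by simp)
        · rw [he, auxE_inr, auxE_inl] at h2
          simp only at h2
          have hab : a = b := Fin.ext (by omega)
          subst hab
          rw [Matrix.one_apply_eq]; norm_num
        · rw [he, auxE_inr] at h1
          exact absurd h1 (by simp)
    · -- inr inr
      rw [show A₀ (Sum.inr a) (Sum.inr b) = 0 from rfl]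
      simp only [ne_eq, not_true_eq_false, false_iff]
      intro harc
      rcases hstruct _ harc with ⟨_, h1⟩ | ⟨_, h2⟩ | ⟨h1, _⟩
      · rw [he, auxE_inr] at h1; simp at h1
      · rw [he, auxE_inr, auxE_inr] at h2
        simp only at h2
        have := b.isLt
        omega
      · rw [he, auxE_inr] at h1; simp at h1
  · -- not HasNSSP
    intro hN
    set X : Matrix (Fin (2*m)) (Fin (2*m)) ℝ := (Y₀.submatrix e.symm e.symm)ᵀ with hX
    have hzero : ∀ i j, (A₀.submatrix e.symm e.symm) i j * X i j = 0 := by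
      intro i j
      obtain ⟨p, rfl⟩ := e.surjective i
      obtain ⟨q, rfl⟩ := e.surjective j
      rw [hX, Matrix.transpose_apply, Matrix.submatrix_apply, Matrix.submatrix_apply,
        e.symm_apply_apply, e.symm_apply_apply]
      rcases p with a | a <;> rcases q with b | b
      · rw [show Y₀ (Sum.inl b) (Sum.inl a) = S b a from rfl,
          show A₀ (Sum.inl a) (Sum.inl b) = (1 : Matrix (Fin m) (Fin m) ℝ) a b from rfl]
        rcases eq_or_ne a b with rfl | hne
        · rw [hSdiag a, mul_zero]
        · rw [Matrix.one_apply_ne hne, zero_mul]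
      · rw [show Y₀ (Sum.inr b) (Sum.inl a) = 0 from rfl, mul_zero]
      · rw [show Y₀ (Sum.inl b) (Sum.inr a) = 0 from rfl, mul_zero]
      · rw [show A₀ (Sum.inr a) (Sum.inr b) = 0 from rfl, zero_mul]
    have hcommX : (A₀.submatrix e.symm e.symm) * Xᵀ - Xᵀ * (A₀.submatrix e.symm e.symm) = 0 := by
      rw [hX, Matrix.transpose_transpose, Matrix.submatrix_mul_equiv,
        Matrix.submatrix_mul_equiv, hAY, sub_self]
    have hX0 := hN X hzero hcommX
    -- derive contradiction : S a0 a2 ≠ 0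
    set a0 : Fin m := ⟨0, hm0⟩ with ha0
    set a1 : Fin m := ⟨1, by omega⟩ with ha1
    set a2 : Fin m := ⟨2, by omega⟩ with ha2
    have harc01 : ((⟨0, by omega⟩ : Fin (2*m)), (⟨m + 1, by omega⟩ : Fin (2*m))) ∈ E := by
      have h := hshift 0 hm0
      have hmod : (0 + 1) % m = 1 := Nat.mod_eq_of_lt (by omega)
      simpa [hmod] using h
    have harc12 : ((⟨1, by omega⟩ : Fin (2*m)), (⟨m + 2, by omega⟩ : Fin (2*m))) ∈ E := by
      have h := hshift 1 (by omega)
      have hmod : (1 + 1) % m = 2 := Nat.mod_eq_of_lt (by omega)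
      simpa [hmod] using h
    have h01 : B a0 a1 = 1 := by
      refine hBval1 a0 a1 harc01 (Or.inl ?_)
      show (1 : ℕ) = (0 + 1) % m
      rw [Nat.mod_eq_of_lt (by omega)]
    have h12 : B a1 a2 = 1 := by
      refine hBval1 a1 a2 harc12 (Or.inl ?_)
      show (2 : ℕ) = (1 + 1) % m
      rw [Nat.mod_eq_of_lt (by omega)]
    have hnot02 : ¬((a2 : Fin m).val = (a0.val + 1) % m ∨ a0 = a2) := by
      rintro (h | h)
      · rw [show a2.val = 2 from rfl, show a0.val = 0 from rfl,
          Nat.mod_eq_of_lt (by omega : 0 + 1 < m)] at h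
        omega
      · have := congrArg Fin.val h
        simp [ha0, ha2] at this
    have key : ∀ k : Fin m, k ≠ a1 → |B a0 k * B k a2| ≤ ε := by
      intro k hk
      rcases eq_or_ne k a0 with rfl | hka0
      · have h2 : |B a0 a2| ≤ ε := hBeps a0 a2 hnot02
        calc |B a0 a0 * B a0 a2| = |B a0 a0| * |B a0 a2| := abs_mul _ _
          _ ≤ 1 * ε := mul_le_mul (hBabs _ _) h2 (abs_nonneg _) zero_le_one
          _ = ε := one_mul ε
      · have h1 : |B a0 k| ≤ ε := by
          refine hBeps a0 k ?_
          rintro (h | h)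
          · rw [show a0.val = 0 from rfl, Nat.mod_eq_of_lt (by omega : 0 + 1 < m)] at h
            exact hk (Fin.ext h)
          · exact hka0 h.symm
        calc |B a0 k * B k a2| = |B a0 k| * |B k a2| := abs_mul _ _
          _ ≤ ε * 1 := mul_le_mul h1 (hBabs _ _) (abs_nonneg _) hε0.le
          _ = ε := mul_one ε
    have hsum : (B * B) a0 a2 =
        B a0 a1 * B a1 a2 + ∑ k ∈ Finset.univ.erase a1, B a0 k * B k a2 := by
      rw [Matrix.mul_apply, ← Finset.add_sum_erase _ _ (Finset.mem_univ a1)]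
    have hr : |∑ k ∈ Finset.univ.erase a1, B a0 k * B k a2| ≤ ((m - 1 : ℕ) : ℝ) * ε := by
      calc |∑ k ∈ Finset.univ.erase a1, B a0 k * B k a2|
          ≤ ∑ k ∈ Finset.univ.erase a1, |B a0 k * B k a2| :=
            Finset.abs_sum_le_sum_abs _ _
        _ ≤ (Finset.univ.erase a1).card • ε :=
            Finset.sum_le_card_nsmul _ _ _ (fun k hk => key k (Finset.ne_of_mem_erase hk))
        _ = ((m - 1 : ℕ) : ℝ) * ε := by
            rw [Finset.card_erase_of_mem (Finset.mem_univ _), Finset.card_univ,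
              Fintype.card_fin, nsmul_eq_mul]
    have hb02 : |B a0 a2| ≤ ε := hBeps a0 a2 hnot02
    have hcast : ((m - 1 : ℕ) : ℝ) * ε + ε < 1 := by
      have h1 : ((m - 1 : ℕ) : ℝ) = (m : ℝ) - 1 := by
        rw [Nat.cast_sub (by omega)]; norm_num
      have h2 : (0:ℝ) < 2 * (m:ℝ) + 2 := by positivity
      rw [h1, hεdef]
      have h3 : ((m:ℝ) - 1) * (2 * (m:ℝ) + 2)⁻¹ + (2 * (m:ℝ) + 2)⁻¹
          = (m:ℝ) * (2 * (m:ℝ) + 2)⁻¹ := by ring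
      rw [h3, ← div_eq_mul_inv, div_lt_one h2]
      linarith
    have hSne : S a0 a2 ≠ 0 := by
      intro h0
      rw [hS, Matrix.sub_apply, hsum, h01, h12, one_mul] at h0
      have h3 := abs_le.mp hr
      have h4 := abs_le.mp hb02
      linarith [h3.1, h3.2, h4.1, h4.2, hcast]
    have := congrFun (congrFun hX0 (e (Sum.inl a2))) (e (Sum.inl a0))
    rw [hX, Matrix.transpose_apply, Matrix.submatrix_apply, e.symm_apply_apply,
      e.symm_apply_apply, show Y₀ (Sum.inl a0) (Sum.inl a2) = S a0 a2 from rfl] at this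
    exact hSne (by simpa using this)
end

section
/- Let G be a digraph on n ≥ 2 vertices with no double arcs between distinct vertices (no pair u ≠ v with both (u,v) ∈ E(G) and (v,u) ∈ E(G)), and with exactly one loop (exactly one vertex v has (v,v) ∈ E(G)). Then G does not allow the nSSP: no matrix A ∈ M(G) has the nSSP. -/
open Matrix

/-- a digraph on `n ≥ 2` vertices with no double arcs between distinct
vertices and exactly one loop does not allow the nSSP. -/
theorem no_double_arcs_one_loop_not_allow_nSSP {n : ℕ} (hn : 2 ≤ n)
    (E : Set (Fin n × Fin n))
    (hnd : ∀ u v : Fin n, u ≠ v → (u, v) ∈ E → (v, u) ∉ E)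
    (hloop : ∃! v : Fin n, (v, v) ∈ E) :
    ∀ A : Matrix (Fin n) (Fin n) ℝ, MemPattern E A → ¬ HasNSSP A := by
  intro A hA hS
  obtain ⟨v, hv, huniq⟩ := hloop
  have hc : A v v ≠ 0 := (hA v v).mpr hv
  set X : Matrix (Fin n) (Fin n) ℝ := Aᵀ - (A v v) • 1 with hXdef
  have h1 : ∀ i j, A i j * X i j = 0 := by
    intro i j
    by_cases hij : i = j
    · subst hij
      by_cases hiv : i = v
      · subst hiv
        simp [hXdef, Matrix.one_apply, Matrix.transpose_apply]
      · have : A i i = 0 := by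
          by_contra h
          exact hiv (huniq i ((hA i i).mp h))
        simp [this]
    · have hXij : X i j = A j i := by
        simp [hXdef, Matrix.one_apply, hij]
      rw [hXij]
      by_cases h : A i j = 0
      · simp [h]
      · have : (j, i) ∉ E := hnd i j hij ((hA i j).mp h)
        have : A j i = 0 := by
          by_contra h2; exact this ((hA j i).mp h2)
        simp [this]
  have h2 : A * Xᵀ - Xᵀ * A = 0 := by
    have hXT : Xᵀ = A - (A v v) • 1 := by
      simp [hXdef, Matrix.transpose_sub, Matrix.transpose_smul]
    rw [hXT]
    simp [Matrix.mul_sub, Matrix.sub_mul, Matrix.mul_smul, Matrix.smul_mul]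
  have hX0 : X = 0 := hS X h1 h2
  obtain ⟨w, hw⟩ : ∃ w : Fin n, w ≠ v := by
    have : Nontrivial (Fin n) := Fin.nontrivial_iff_two_le.mpr hn
    exact exists_ne v
  have hXww := congrFun (congrFun hX0 w) w
  have hAww : A w w = 0 := by
    by_contra h
    exact hw (huniq w ((hA w w).mp h))
  simp [hXdef, Matrix.one_apply, Matrix.transpose_apply, hAww] at hXww
  exact hc hXww
end

section
/- Let G be a digraph on n vertices with at most 2n−2 arcs (counting loops), and suppose its underlying simple graph — the undirected graph on the same vertex set with an edge {u,v} for u ≠ v whenever (u,v) ∈ E(G) or (v,u) ∈ E(G) — is a tree on n vertices. Then G does not allow the nSSP: no matrix A ∈ M(G) has the nSSP. -/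
/-!
If `B` commutes with `A` then, for every `d : ι → ℝ`,
`∑ i j, (d i - d j) * A i j * B j i = trace (diagonal d * (A * B - B * A)) = 0`.
So the entries of `Bᵀ` on the arcs `E` of the digraph of `A` are orthogonal to the image of the
weighted incidence map `d ↦ ((d i - d j) * A i j)_{(i,j) ∈ E}`. If the underlying graph is
connected, the kernel of that map consists of the constants, so its image has dimension `n - 1`,
and restricting the centralizer of `A` to the arcs lands in a space of dimension at most
`|E| - (n - 1) < n`. Since the centralizer of any `n × n` matrix has dimension at least `n`, some
nonzero `B` in it vanishes transposed on every arc, and `X = Bᵀ` violates the nSSP.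
-/

open Matrix

open Module Polynomial

theorem MemPattern.apply_eq_zero {V : Type*} {E : Set (V × V)} {A : Matrix V V ℝ}
    (hA : MemPattern E A) {i j : V} (h : (i, j) ∉ E) : A i j = 0 :=
  not_not.mp (mt (hA i j).mp h)

section Centralizer

variable {K V P : Type*} [Field K] [AddCommGroup V] [Module K V] [FiniteDimensional K V]

theorem Module.End.finrank_le_finrank_centralizer_of_conj_mul [CommRing P] [Algebra K P]
    (f : Module.End K V) (ψ : V ≃ₗ[K] P) (x : P)
    (hψ : ∀ v, ψ (f v) = x * ψ v) :
    finrank K V ≤ finrank K (Subalgebra.centralizer K {f}) := by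
  let mul : P →ₗ[K] Module.End K V := ψ.symm.conj.toLinearMap ∘ₗ (Algebra.lmul K P).toLinearMap
  have mul_apply (s : P) (v : V) : mul s v = ψ.symm (s * ψ v) := rfl
  have mem (s : P) : mul s ∈ Subalgebra.centralizer K {f} := by
    rw [Subalgebra.mem_centralizer_iff]
    rintro _ rfl
    ext v
    apply ψ.injective
    simp only [Module.End.mul_apply, mul_apply, hψ, LinearEquiv.apply_symm_apply, mul_left_comm]
  have inj : Function.Injective mul := fun s t hst => by
    simpa [mul_apply] using congrArg (fun g => ψ (g (ψ.symm 1))) hst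
  rw [ψ.finrank_eq]
  exact LinearMap.finrank_le_finrank_of_injective
    (f := LinearMap.codRestrict (Subalgebra.centralizer K {f}).toSubmodule mul mem)
    fun s t hst => inj (congrArg Subtype.val hst)

theorem Module.End.finrank_le_finrank_centralizer (f : Module.End K V) :
    finrank K V ≤ finrank K (Subalgebra.centralizer K {f}) := by
  classical
  -- As a `K[X]`-module via `f`, `V` is a product of quotients of `K[X]` (a commutative ring),
  -- on which `f` acts as multiplication by `X`.
  obtain ⟨ι, _, p, -, e, ⟨φ⟩⟩ :=
    Module.equiv_directSum_of_isTorsion (AEval.isTorsion_of_finiteDimensional K V f)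
  let ψ : V ≃ₗ[K] ∀ i, K[X] ⧸ Submodule.span K[X] {p i ^ e i} :=
    (AEval'.of f).trans ((φ.trans (DirectSum.linearEquivFunOnFintype K[X] ι _)).restrictScalars K)
  refine f.finrank_le_finrank_centralizer_of_conj_mul ψ (algebraMap K[X] _ X) fun v => ?_
  simp only [ψ, LinearEquiv.trans_apply, LinearEquiv.restrictScalars_apply, ← AEval'.X_smul_of,
    map_smul, Algebra.smul_def]

theorem Matrix.card_le_finrank_centralizer {ι : Type*} [Fintype ι] [DecidableEq ι]
    (A : Matrix ι ι K) : Fintype.card ι ≤ finrank K (Subalgebra.centralizer K {A}) := by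
  have h := Module.End.finrank_le_finrank_centralizer (Matrix.toLin' A)
  rw [Module.finrank_fintype_fun_eq_card] at h
  refine h.trans (LinearMap.finrank_le_finrank_of_injective
    (f := LinearMap.codRestrict (Subalgebra.centralizer K {A}).toSubmodule
      (LinearMap.toMatrix'.toLinearMap ∘ₗ (Subalgebra.centralizer K _).val.toLinearMap) ?_) ?_)
  · rintro ⟨g, hg⟩
    rw [Subalgebra.mem_centralizer_iff] at hg
    rw [Subalgebra.mem_toSubmodule, Subalgebra.mem_centralizer_iff]
    rintro _ rfl
    simpa [LinearMap.toMatrix'_mul] using congrArg LinearMap.toMatrix' (hg _ rfl)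
  · intro g g' h
    exact Subtype.ext (LinearMap.toMatrix'.injective (congrArg Subtype.val h))

end Centralizer

theorem Matrix.sum_sub_mul_mul_eq_zero_of_commute {R ι : Type*} [CommRing R] [Fintype ι]
    {A B : Matrix ι ι R} (h : Commute A B) (d : ι → R) :
    ∑ i, ∑ j, (d i - d j) * A i j * B j i = 0 := by
  calc ∑ i, ∑ j, (d i - d j) * A i j * B j i
      = ∑ i, d i * (A * B) i i - ∑ j, d j * (B * A) j j := by
        simp only [mul_apply, Finset.mul_sum, sub_mul, Finset.sum_sub_distrib]
        rw [Finset.sum_comm (f := fun j i => d j * (B j i * A i j))]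
        congr 1 <;> exact Finset.sum_congr rfl fun _ _ => Finset.sum_congr rfl fun _ _ => by ring
    _ = 0 := by rw [h.eq, sub_self]

theorem SimpleGraph.Preconnected.eq_of_forall_adj {V α : Type*} {G : SimpleGraph V}
    (hG : G.Preconnected) {f : V → α} (hf : ∀ u v, G.Adj u v → f u = f v) (u v : V) :
    f u = f v := by
  obtain ⟨w⟩ := hG u v
  induction w with
  | nil => rfl
  | cons h _ ih => exact (hf _ _ h).trans ih

theorem Submodule.finrank_add_finrank_le_of_dotProduct_eq_zero {K m : Type*} [Field K] [Fintype m]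
    {S T : Submodule K (m → K)} (h : ∀ s ∈ S, ∀ t ∈ T, s ⬝ᵥ t = 0) :
    finrank K S + finrank K T ≤ Fintype.card m := by
  classical
  let S' := S.map (dotProductEquiv K m).toLinearMap
  have hT : T ≤ S'.dualCoannihilator := by
    intro t ht
    rw [Submodule.mem_dualCoannihilator]
    rintro _ ⟨s, hs, rfl⟩
    exact h s hs t ht
  have hS' := Subspace.finrank_add_finrank_dualCoannihilator_eq S'
  rw [LinearEquiv.finrank_map_eq, Module.finrank_fintype_fun_eq_card] at hS'
  have := Submodule.finrank_mono hT
  omega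

section WeightedIncidence

variable {K ι : Type*} [Field K] [Fintype ι] (A : Matrix ι ι K) (E : Finset (ι × ι))

def Matrix.weightedIncidence : (ι → K) →ₗ[K] (E → K) where
  toFun d q := (d q.1.1 - d q.1.2) * A q.1.1 q.1.2
  map_add' _ _ := by ext; simp only [Pi.add_apply]; ring
  map_smul' _ _ := by ext; simp only [Pi.smul_apply, smul_eq_mul, RingHom.id_apply]; ring

theorem Matrix.card_le_finrank_range_weightedIncidence_add_one (hA : ∀ q ∈ E, A q.1 q.2 ≠ 0)
    (hG : (SimpleGraph.fromRel fun u v => (u, v) ∈ E).Connected) :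
    Fintype.card ι ≤ finrank K (LinearMap.range (A.weightedIncidence E)) + 1 := by
  obtain ⟨i₀⟩ := hG.nonempty
  have hker : LinearMap.ker (A.weightedIncidence E) ≤ K ∙ 1 := by
    intro d hd
    have harc : ∀ q ∈ E, d q.1 = d q.2 := fun q hq => by
      have := congrFun hd ⟨q, hq⟩
      simpa [weightedIncidence, sub_eq_zero, hA q hq] using this
    refine Submodule.mem_span_singleton.mpr ⟨d i₀, funext fun v => ?_⟩
    simpa using hG.preconnected.eq_of_forall_adj (f := d)
      (fun u v ⟨_, huv⟩ => huv.elim (harc _) (fun h => (harc _ h).symm)) i₀ v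
  have hspan : finrank K (K ∙ (1 : ι → K)) ≤ 1 := by
    simpa using finrank_span_le_card (R := K) ({1} : Set (ι → K))
  have hrank := (A.weightedIncidence E).finrank_range_add_finrank_ker
  rw [Module.finrank_fintype_fun_eq_card] at hrank
  have := Submodule.finrank_mono hker
  omega

end WeightedIncidence

theorem HasNSSP.eq_zero_of_commute {ι : Type*} [Fintype ι] {E : Finset (ι × ι)}
    {A B : Matrix ι ι ℝ} (hN : HasNSSP A) (hA : MemPattern (↑E : Set (ι × ι)) A)
    (hAB : Commute A B) (hE : ∀ q ∈ E, B q.2 q.1 = 0) : B = 0 := by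
  refine Matrix.transpose_eq_zero.mp (hN Bᵀ (fun i j => ?_) ?_)
  · by_cases hij : (i, j) ∈ E
    · rw [transpose_apply, hE _ hij, mul_zero]
    · rw [hA.apply_eq_zero hij, zero_mul]
  · rw [transpose_transpose, hAB.eq, sub_self]

theorem dotProduct_weightedIncidence_eq_zero {ι : Type*} [Fintype ι] {E : Finset (ι × ι)}
    {A B : Matrix ι ι ℝ} (hA : MemPattern (↑E : Set (ι × ι)) A) (hAB : Commute A B) (d : ι → ℝ) :
    A.weightedIncidence E d ⬝ᵥ (fun q : E => B q.1.2 q.1.1) = 0 := by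
  classical
  have hoff : ∀ q ∉ E, (d q.1 - d q.2) * A q.1 q.2 * B q.2 q.1 = 0 := fun q hq => by
    rw [hA.apply_eq_zero hq, mul_zero, zero_mul]
  rw [← Matrix.sum_sub_mul_mul_eq_zero_of_commute hAB d, ← Fintype.sum_prod_type',
    ← Finset.sum_subset (Finset.subset_univ E) fun q _ => hoff q]
  exact Finset.sum_coe_sort E fun q => (d q.1 - d q.2) * A q.1 q.2 * B q.2 q.1

theorem not_hasNSSP_of_connected_of_card_le {ι : Type*} [Fintype ι] (E : Finset (ι × ι))
    (A : Matrix ι ι ℝ) (hA : MemPattern (↑E : Set (ι × ι)) A)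
    (hG : (SimpleGraph.fromRel fun u v => (u, v) ∈ E).Connected)
    (hcard : E.card + 2 ≤ 2 * Fintype.card ι) : ¬ HasNSSP A := by
  classical
  intro hN
  let C := Subalgebra.centralizer ℝ {A}
  let ρ : C →ₗ[ℝ] (E → ℝ) :=
    { toFun B q := (B : Matrix ι ι ℝ) q.1.2 q.1.1
      map_add' _ _ := rfl
      map_smul' _ _ := rfl }
  have hcomm (B : C) : Commute A B := (Subalgebra.mem_centralizer_iff ℝ).mp B.2 A rfl
  have hρ : Function.Injective ρ := (injective_iff_map_eq_zero ρ).mpr fun B hB =>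
    Subtype.ext (hN.eq_zero_of_commute hA (hcomm B) fun q hq => congrFun hB ⟨q, hq⟩)
  have h1 := Submodule.finrank_add_finrank_le_of_dotProduct_eq_zero
    (S := LinearMap.range (A.weightedIncidence E)) (T := LinearMap.range ρ) (by
      rintro _ ⟨d, rfl⟩ _ ⟨B, rfl⟩
      exact dotProduct_weightedIncidence_eq_zero hA (hcomm B) d)
  have h2 := A.card_le_finrank_range_weightedIncidence_add_one E
    (fun q hq => (hA q.1 q.2).mpr hq) hG
  have h3 : Fintype.card ι ≤ finrank ℝ C := Matrix.card_le_finrank_centralizer A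
  rw [LinearMap.finrank_range_of_inj hρ, Fintype.card_coe] at h1
  omega

/-- a digraph on `n` vertices with at most `2n - 2` arcs (loops included)
whose underlying simple graph is a tree does not allow the nSSP. -/
theorem tree_few_arcs_not_allow_nSSP {n : ℕ}
    (E : Finset (Fin n × Fin n))
    (hcard : E.card ≤ 2 * n - 2)
    (htree : (SimpleGraph.mk
        (fun u v : Fin n => u ≠ v ∧ ((u, v) ∈ E ∨ (v, u) ∈ E))
        (by constructor; intro u v h; exact ⟨h.1.symm, Or.symm h.2⟩)
        (by constructor; intro v h; exact h.1 rfl)).IsTree) :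
    ∀ A : Matrix (Fin n) (Fin n) ℝ,
      MemPattern (↑E : Set (Fin n × Fin n)) A → ¬ HasNSSP A := by
  intro A hA
  have hG : (SimpleGraph.fromRel fun u v => (u, v) ∈ E).Connected := htree.connected
  have hn : 0 < n := Fin.pos_iff_nonempty.mpr hG.nonempty
  exact not_hasNSSP_of_connected_of_card_le E A hA hG (by rw [Fintype.card_fin]; omega)
end

section
/- Let G and G_ℓ be digraphs on vertex set [n] with E(G) ⊆ E(G_ℓ). Let A ∈ M(G) and let X be a real n×n matrix such that A Xᵀ − Xᵀ A = O and X_{uv} = 0 for every (u,v) ∈ E(G_ℓ). If there exist vertices i, j, k such that N⁺_G[i] ∩ (N⁺_{G_ℓ}[j])ᶜ = {k} and N⁻_G[j] ∩ (N⁻_{G_ℓ}[i])ᶜ = ∅, then X_{j,k} = 0. -/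
open Matrix

/-- the monomial rule, out-neighbour version (Lemma rule1(A)). -/
theorem monomial_rule_out {n : ℕ} (G Gl : Set (Fin n × Fin n)) (hsub : G ⊆ Gl)
    (A : Matrix (Fin n) (Fin n) ℝ) (hA : MemPattern G A)
    (X : Matrix (Fin n) (Fin n) ℝ)
    (hX : ∀ u v : Fin n, (u, v) ∈ Gl → X u v = 0)
    (hcomm : A * Xᵀ - Xᵀ * A = 0)
    (i j k : Fin n)
    (h1 : outNbhd G i ∩ (outNbhd Gl j)ᶜ = {k})
    (h2 : inNbhd G j ∩ (inNbhd Gl i)ᶜ = ∅) :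
    X j k = 0 := by
  have hk : k ∈ outNbhd G i ∩ (outNbhd Gl j)ᶜ := by rw [h1]; rfl
  have hAik : A i k ≠ 0 := (hA i k).2 hk.1
  have heq : (A * Xᵀ) i j = (Xᵀ * A) i j := by
    have := congrFun (congrFun hcomm i) j
    simp only [Matrix.sub_apply, Matrix.zero_apply] at this
    linarith
  rw [Matrix.mul_apply, Matrix.mul_apply] at heq
  simp only [Matrix.transpose_apply] at heq
  have hrhs : ∀ m, X m i * A m j = 0 := by
    intro m
    by_cases hAm : A m j = 0
    · rw [hAm, mul_zero]
    · have hm : m ∈ inNbhd G j := (hA m j).1 hAm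
      have : m ∉ (inNbhd Gl i)ᶜ := fun hc =>
        Set.eq_empty_iff_forall_notMem.1 h2 m ⟨hm, hc⟩
      rw [hX m i (by simpa [inNbhd] using not_not.1 this), zero_mul]
  have hlhs : ∀ m ∈ Finset.univ, m ≠ k → A i m * X j m = 0 := by
    intro m _ hmk
    by_cases hAm : A i m = 0
    · rw [hAm, zero_mul]
    · by_cases hXm : X j m = 0
      · rw [hXm, mul_zero]
      · exfalso
        have hmem : m ∈ outNbhd G i ∩ (outNbhd Gl j)ᶜ :=
          ⟨(hA i m).1 hAm, fun hc => hXm (hX j m hc)⟩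
        rw [h1] at hmem
        exact hmk hmem
  rw [Finset.sum_eq_zero (fun m _ => hrhs m)] at heq
  rw [Finset.sum_eq_single_of_mem k (Finset.mem_univ k) hlhs] at heq
  exact (mul_eq_zero.1 heq).resolve_left hAik
end

section
/- Let G and G_ℓ be digraphs on vertex set [n] with E(G) ⊆ E(G_ℓ). Let A ∈ M(G) and let X be a real n×n matrix such that A Xᵀ − Xᵀ A = O and X_{uv} = 0 for every (u,v) ∈ E(G_ℓ). If there exist vertices i, j, m such that N⁺_G[i] ∩ (N⁺_{G_ℓ}[j])ᶜ = ∅ and N⁻_G[j] ∩ (N⁻_{G_ℓ}[i])ᶜ = {m}, then X_{m,i} = 0. -/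
open Matrix

/-- the monomial rule, in-neighbour version (Lemma rule1(B)). -/
theorem monomial_rule_in {n : ℕ} (G Gl : Set (Fin n × Fin n)) (hsub : G ⊆ Gl)
    (A : Matrix (Fin n) (Fin n) ℝ) (hA : MemPattern G A)
    (X : Matrix (Fin n) (Fin n) ℝ)
    (hX : ∀ u v : Fin n, (u, v) ∈ Gl → X u v = 0)
    (hcomm : A * Xᵀ - Xᵀ * A = 0)
    (i j m : Fin n)
    (h1 : outNbhd G i ∩ (outNbhd Gl j)ᶜ = ∅)
    (h2 : inNbhd G j ∩ (inNbhd Gl i)ᶜ = {m}) :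
    X m i = 0 := by
  -- m is in the intersection
  have hm : m ∈ inNbhd G j ∩ (inNbhd Gl i)ᶜ := by rw [h2]; rfl
  have hAmj : A m j ≠ 0 := (hA m j).mpr hm.1
  have key := congrFun (congrFun hcomm i) j
  simp only [Matrix.sub_apply, Matrix.mul_apply, Matrix.transpose_apply,
    Matrix.zero_apply] at key
  have hsum1 : ∑ k, A i k * X j k = 0 := by
    apply Finset.sum_eq_zero
    intro k _
    by_cases hk : (i, k) ∈ G
    · have hk2 : k ∈ outNbhd Gl j := by
        by_contra hkc
        exact Set.eq_empty_iff_forall_notMem.mp h1 k ⟨hk, hkc⟩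
      rw [hX j k hk2, mul_zero]
    · have : A i k = 0 := by
        by_contra h; exact hk ((hA i k).mp h)
      rw [this, zero_mul]
  have hsum2 : ∑ k, X k i * A k j = X m i * A m j := by
    apply Finset.sum_eq_single
    · intro k _ hkm
      by_cases hkj : (k, j) ∈ G
      · by_cases hki : (k, i) ∈ Gl
        · rw [hX k i hki, zero_mul]
        · exact absurd (Set.mem_singleton_iff.mp (h2 ▸ Set.mem_inter hkj hki)) hkm
      · have : A k j = 0 := by
          by_contra h; exact hkj ((hA k j).mp h)
        rw [this, mul_zero]
    · intro h; exact absurd (Finset.mem_univ m) h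
  rw [hsum1, hsum2, zero_sub, neg_eq_zero] at key
  rcases mul_eq_zero.mp key with h | h
  · exact h
  · exact absurd h hAmj
end

section
/- Let G be a digraph on vertex set [n], and suppose there is a finite sequence of digraphs G = G₀, G₁, …, G_k on [n] with E(G₀) ⊆ E(G₁) ⊆ ⋯ ⊆ E(G_k) = [n] × [n] (the complete digraph with all loops), such that for every ℓ < k and every arc (u,v) ∈ E(G_{ℓ+1}) \ E(G_ℓ) at least one of the following holds: (A) there exists a vertex i with N⁺_G[i] ∩ (N⁺_{G_ℓ}[u])ᶜ = {v} and N⁻_G[u] ∩ (N⁻_{G_ℓ}[i])ᶜ = ∅; or (B) there exists a vertex j with N⁺_G[v] ∩ (N⁺_{G_ℓ}[j])ᶜ = ∅ and N⁻_G[j] ∩ (N⁻_{G_ℓ}[v])ᶜ = {u}. Then G requires the nSSP. -/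
open Matrix

/-- if there is a chain of digraphs from `G` to the complete looped digraph
in which every newly added arc is justified by the monomial rule, then `G` requires the nSSP. -/
theorem chain_of_monomial_rules_requires_nSSP {n : ℕ} (E : Set (Fin n × Fin n))
    (k : ℕ) (Gs : ℕ → Set (Fin n × Fin n))
    (h0 : Gs 0 = E) (hk : Gs k = Set.univ)
    (hmono : ∀ ℓ < k, Gs ℓ ⊆ Gs (ℓ + 1))
    (hstep : ∀ ℓ < k, ∀ u v : Fin n, (u, v) ∈ Gs (ℓ + 1) → (u, v) ∉ Gs ℓ →
      ((∃ i : Fin n, outNbhd E i ∩ (outNbhd (Gs ℓ) u)ᶜ = {v} ∧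
                      inNbhd E u ∩ (inNbhd (Gs ℓ) i)ᶜ = ∅) ∨
       (∃ j : Fin n, outNbhd E v ∩ (outNbhd (Gs ℓ) j)ᶜ = ∅ ∧
                      inNbhd E j ∩ (inNbhd (Gs ℓ) v)ᶜ = {u}))) :
    RequiresNSSP E := by
  intro A hA X hX1 hX2
  have hAX : ∀ i u : Fin n, ∑ j, A i j * X u j = ∑ j, X j i * A j u := by
    intro i u
    have h := sub_eq_zero.mp hX2
    have h2 := congrFun (congrFun h i) u
    simpa [Matrix.mul_apply, Matrix.transpose_apply] using h2
  have key : ∀ ℓ, ℓ ≤ k → ∀ u v : Fin n, (u, v) ∈ Gs ℓ → X u v = 0 := by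
    intro ℓ
    induction ℓ with
    | zero =>
      intro _ u v huv
      rw [h0] at huv
      exact (mul_eq_zero.mp (hX1 u v)).resolve_left ((hA u v).mpr huv)
    | succ ℓ ih =>
      intro hk' u v huv
      have hℓk : ℓ < k := hk'
      by_cases hold : (u, v) ∈ Gs ℓ
      · exact ih hℓk.le u v hold
      rcases hstep ℓ hℓk u v huv hold with ⟨i, hout, hin⟩ | ⟨j, hout, hin⟩
      · have hv : v ∈ outNbhd E i ∩ (outNbhd (Gs ℓ) u)ᶜ := by rw [hout]; rfl
        have hAiv : A i v ≠ 0 := (hA i v).mpr hv.1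
        have hL : ∑ m, A i m * X u m = A i v * X u v := by
          apply Finset.sum_eq_single v
          · intro m _ hm
            by_cases hAim : A i m = 0
            · simp [hAim]
            · have hmE : m ∈ outNbhd E i := (hA i m).mp hAim
              have hmem : m ∈ outNbhd (Gs ℓ) u := by
                by_contra hc
                have hmv : m ∈ ({v} : Set (Fin n)) := by rw [← hout]; exact ⟨hmE, hc⟩
                exact hm hmv
              have hz := ih hℓk.le u m hmem
              simp [hz]
          · intro hv'; exact absurd (Finset.mem_univ v) hv'
        have hR : ∑ m, X m i * A m u = 0 := by
          apply Finset.sum_eq_zero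
          intro m _
          by_cases hAmu : A m u = 0
          · simp [hAmu]
          · have hmE : m ∈ inNbhd E u := (hA m u).mp hAmu
            have hmi : (m, i) ∈ Gs ℓ := by
              by_contra hc
              exact (Set.eq_empty_iff_forall_notMem.mp hin m) ⟨hmE, hc⟩
            simp [ih hℓk.le m i hmi]
        have heq := hAX i u
        rw [hL, hR] at heq
        exact (mul_eq_zero.mp heq).resolve_left hAiv
      · have hu : u ∈ inNbhd E j ∩ (inNbhd (Gs ℓ) v)ᶜ := by rw [hin]; rfl
        have hAuj : A u j ≠ 0 := (hA u j).mpr hu.1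
        have hL : ∑ m, A v m * X j m = 0 := by
          apply Finset.sum_eq_zero
          intro m _
          by_cases hAvm : A v m = 0
          · simp [hAvm]
          · have hmE : m ∈ outNbhd E v := (hA v m).mp hAvm
            have hjm : (j, m) ∈ Gs ℓ := by
              by_contra hc
              exact (Set.eq_empty_iff_forall_notMem.mp hout m) ⟨hmE, hc⟩
            simp [ih hℓk.le j m hjm]
        have hR : ∑ m, X m v * A m j = X u v * A u j := by
          apply Finset.sum_eq_single u
          · intro m _ hm
            by_cases hAmj : A m j = 0
            · simp [hAmj]
            · have hmE : m ∈ inNbhd E j := (hA m j).mp hAmj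
              have hmem : m ∈ inNbhd (Gs ℓ) v := by
                by_contra hc
                have hmu : m ∈ ({u} : Set (Fin n)) := by rw [← hin]; exact ⟨hmE, hc⟩
                exact hm hmu
              simp [ih hℓk.le m v hmem]
          · intro hu'; exact absurd (Finset.mem_univ u) hu'
        have heq := hAX v j
        rw [hL, hR] at heq
        exact (mul_eq_zero.mp heq.symm).resolve_right hAuj
  have hall := key k le_rfl
  rw [hk] at hall
  ext u v
  exact hall u v (Set.mem_univ _)
end

section
/- Let 1 ≤ m ≤ n and let G be a digraph on [n] such that: for all i, j ∈ [m], (i,j) ∈ E(G) if and only if |i−j| ≤ 1 (so the induced subdigraph on [m] is the double path with all m loops), and N_G[i] ⊆ [m] for all i ∈ [m−1]. If A ∈ M(G) and X is a real n×n matrix with X_{uv} = 0 for all (u,v) ∈ E(G) and A Xᵀ − Xᵀ A = O, then X_{ij} = 0 for all 1 ≤ i, j ≤ m. Moreover, if additionally N⁺_G[m] = N⁻_G[m] = {m−1, m, m+1} and (m+1, m+1) ∉ E(G), then X_{ij} = 0 for all 1 ≤ i, j ≤ m+1 with i ≠ j. -/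
open Matrix

/-- pendent fully-looped double path lemma. Vertices are 0-indexed:
`Fin` index `a` is 1-based vertex `a+1`; so 1-based `[m]` is `{a | a.val < m}`,
the 1-based vertex `m` is the index with `val + 1 = m`, and `m+1` the index with `val = m`. -/
theorem pendent_looped_path_zeros {n m : ℕ} (hm : 1 ≤ m) (hmn : m ≤ n)
    (E : Set (Fin n × Fin n))
    (hpath : ∀ i j : Fin n, i.val < m → j.val < m →
      ((i, j) ∈ E ↔ (i.val ≤ j.val + 1 ∧ j.val ≤ i.val + 1)))
    (hclosed : ∀ i : Fin n, i.val + 1 < m → ∀ w : Fin n,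
      ((i, w) ∈ E ∨ (w, i) ∈ E) → w.val < m)
    (A : Matrix (Fin n) (Fin n) ℝ) (hA : MemPattern E A)
    (X : Matrix (Fin n) (Fin n) ℝ)
    (hX : ∀ u v : Fin n, (u, v) ∈ E → X u v = 0)
    (hcomm : A * Xᵀ - Xᵀ * A = 0) :
    (∀ i j : Fin n, i.val < m → j.val < m → X i j = 0) ∧
    (m < n →
      (∀ v w : Fin n, v.val + 1 = m →
        (((v, w) ∈ E ↔ (w.val + 2 = m ∨ w.val + 1 = m ∨ w.val = m)) ∧
         ((w, v) ∈ E ↔ (w.val + 2 = m ∨ w.val + 1 = m ∨ w.val = m)))) →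
      (∀ v : Fin n, v.val = m → (v, v) ∉ E) →
      ∀ i j : Fin n, i.val < m + 1 → j.val < m + 1 → i ≠ j → X i j = 0) := by
  classical
  have hAX : A * Xᵀ = Xᵀ * A := sub_eq_zero.mp hcomm
  have comm' : ∀ i j : Fin n, (∑ k, A i k * X j k) = ∑ k, X k i * A k j := by
    intro i j
    have := congrFun (congrFun hAX i) j
    simpa [Matrix.mul_apply, Matrix.transpose_apply] using this
  -- val inequality helper
  have vne : ∀ {a b : Fin n}, a ≠ b → a.val ≠ b.val := fun h h' => h (Fin.ext h')
  -- Main band induction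
  have S : ∀ d : ℕ, ∀ i j : Fin n, i.val < m → j.val < m →
      j.val ≤ i.val + d → i.val ≤ j.val + d → X i j = 0 := by
    intro d
    induction d with
    | zero =>
      intro i j hi hj h1 h2
      exact hX i j ((hpath i j hi hj).mpr ⟨by omega, by omega⟩)
    | succ d ih =>
      intro i j hi hj h1 h2
      by_cases hsmall : i.val ≤ j.val + 1 ∧ j.val ≤ i.val + 1
      · exact hX i j ((hpath i j hi hj).mpr hsmall)
      · have hd : 1 ≤ d := by omega
        by_cases hde : j.val ≤ i.val + d ∧ i.val ≤ j.val + d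
        · exact ih i j hi hj hde.1 hde.2
        · -- upper-triangle diagonal induction
          have upper : ∀ pv : ℕ, ∀ p q : Fin n, p.val < pv → q.val < m →
              q.val = p.val + d + 1 → X p q = 0 := by
            intro pv
            induction pv with
            | zero => intro p q hp; omega
            | succ pv ihp =>
              intro p q hp hq hpq
              have hq1 : 1 ≤ q.val := by omega
              have hqn : q.val - 1 < n := by omega
              set t : Fin n := ⟨q.val - 1, hqn⟩ with ht
              have htv : t.val + 1 = q.val := by simp [ht]; omega
              have htm : t.val < m := by omega
              have hpm : p.val < m := by omega
              have hp1m : p.val + 1 < m := by omega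
              have heq := comm' t p
              have hLHS : (∑ k, A t k * X p k) = A t q * X p q := by
                refine Finset.sum_eq_single_of_mem q (Finset.mem_univ q) ?_
                intro k _ hk
                by_cases hAk : A t k = 0
                · simp [hAk]
                · have hE : (t, k) ∈ E := (hA t k).mp hAk
                  have hkm : k.val < m := hclosed t (by omega) k (Or.inl hE)
                  have hnear := (hpath t k htm hkm).mp hE
                  have hkq : k.val ≠ q.val := vne hk
                  have : X p k = 0 := ih p k hpm hkm (by omega) (by omega)
                  simp [this]
              have hRHS : (∑ k, X k t * A k p) = 0 := by
                refine Finset.sum_eq_zero ?_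
                intro k _
                by_cases hAk : A k p = 0
                · simp [hAk]
                · have hE : (k, p) ∈ E := (hA k p).mp hAk
                  have hkm : k.val < m := hclosed p hp1m k (Or.inr hE)
                  have hnear := (hpath k p hkm hpm).mp hE
                  rcases Nat.lt_or_ge k.val p.val with hlt | hge
                  · have hk1 : k.val + 1 = p.val := by omega
                    have : X k t = 0 := ihp k t (by omega) htm (by omega)
                    simp [this]
                  · have : X k t = 0 := ih k t hkm htm (by omega) (by omega)
                    simp [this]
              have hAtq : A t q ≠ 0 :=
                (hA t q).mpr ((hpath t q htm hq).mpr ⟨by omega, by omega⟩)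
              have := heq.symm.trans hLHS
              rw [hRHS] at this
              rcases mul_eq_zero.mp this.symm with h | h
              · exact absurd h hAtq
              · exact h
          -- lower-triangle diagonal induction
          have lower : ∀ pv : ℕ, ∀ p q : Fin n, p.val < pv → q.val < m →
              q.val = p.val + d + 1 → X q p = 0 := by
            intro pv
            induction pv with
            | zero => intro p q hp; omega
            | succ pv ihp =>
              intro p q hp hq hpq
              have hq1 : 1 ≤ q.val := by omega
              have hqn : q.val - 1 < n := by omega
              set t : Fin n := ⟨q.val - 1, hqn⟩ with ht
              have htv : t.val + 1 = q.val := by simp [ht]; omega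
              have htm : t.val < m := by omega
              have hpm : p.val < m := by omega
              have hp1m : p.val + 1 < m := by omega
              have heq := comm' p t
              have hLHS : (∑ k, A p k * X t k) = 0 := by
                refine Finset.sum_eq_zero ?_
                intro k _
                by_cases hAk : A p k = 0
                · simp [hAk]
                · have hE : (p, k) ∈ E := (hA p k).mp hAk
                  have hkm : k.val < m := hclosed p hp1m k (Or.inl hE)
                  have hnear := (hpath p k hpm hkm).mp hE
                  rcases Nat.lt_or_ge k.val p.val with hlt | hge
                  · have hk1 : k.val + 1 = p.val := by omega
                    have : X t k = 0 := ihp k t (by omega) htm (by omega)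
                    simp [this]
                  · have : X t k = 0 := ih t k htm hkm (by omega) (by omega)
                    simp [this]
              have hRHS : (∑ k, X k p * A k t) = X q p * A q t := by
                refine Finset.sum_eq_single_of_mem q (Finset.mem_univ q) ?_
                intro k _ hk
                by_cases hAk : A k t = 0
                · simp [hAk]
                · have hE : (k, t) ∈ E := (hA k t).mp hAk
                  have hkm : k.val < m := hclosed t (by omega) k (Or.inr hE)
                  have hnear := (hpath k t hkm htm).mp hE
                  have hkq : k.val ≠ q.val := vne hk
                  have : X k p = 0 := ih k p hkm hpm (by omega) (by omega)
                  simp [this]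
              have hAqt : A q t ≠ 0 :=
                (hA q t).mpr ((hpath q t hq htm).mpr ⟨by omega, by omega⟩)
              have := heq.trans hRHS
              rw [hLHS] at this
              rcases mul_eq_zero.mp this.symm with h | h
              · exact h
              · exact absurd h hAqt
          rcases (by omega : j.val = i.val + d + 1 ∨ i.val = j.val + d + 1) with h | h
          · exact upper (i.val + 1) i j (by omega) hj h
          · exact lower (j.val + 1) j i (by omega) hi h
  have part1 : ∀ i j : Fin n, i.val < m → j.val < m → X i j = 0 := fun i j hi hj =>
    S m i j hi hj (by omega) (by omega)
  refine ⟨part1, ?_⟩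
  intro hmn' hNm _hloop i j hi hj hij
  set u : Fin n := ⟨m, hmn'⟩ with hu
  have huv : u.val = m := rfl
  have hvn : m - 1 < n := by omega
  set v : Fin n := ⟨m - 1, hvn⟩ with hv
  have hvv : v.val + 1 = m := by simp [hv]; omega
  have hvm : v.val < m := by omega
  rcases Nat.lt_or_ge i.val m with him | him
  · rcases Nat.lt_or_ge j.val m with hjm | hjm
    · exact part1 i j him hjm
    · -- j = u, i.val < m : show X i u = 0
      have hju : j = u := Fin.ext (by omega)
      subst hju
      rcases Nat.lt_or_ge (i.val + 1) m with hi1 | hi1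
      · -- equation at (v, i)
        have heq := comm' v i
        have hRHS : (∑ k, X k v * A k i) = 0 := by
          refine Finset.sum_eq_zero ?_
          intro k _
          by_cases hAk : A k i = 0
          · simp [hAk]
          · have hE : (k, i) ∈ E := (hA k i).mp hAk
            have hkm : k.val < m := hclosed i hi1 k (Or.inr hE)
            simp [part1 k v hkm hvm]
        have hLHS : (∑ k, A v k * X i k) = A v u * X i u := by
          refine Finset.sum_eq_single_of_mem u (Finset.mem_univ u) ?_
          intro k _ hk
          by_cases hAk : A v k = 0
          · simp [hAk]
          · have hE : (v, k) ∈ E := (hA v k).mp hAk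
            have := ((hNm v k hvv).1).mp hE
            have hkm : k.val < m := by
              have := vne hk
              omega
            simp [part1 i k him hkm]
        have hAvu : A v u ≠ 0 :=
          (hA v u).mpr (((hNm v u hvv).1).mpr (Or.inr (Or.inr huv)))
        have := (hLHS.symm.trans heq).trans hRHS
        rcases mul_eq_zero.mp this with h | h
        · exact absurd h hAvu
        · exact h
      · -- i.val + 1 = m, i.e. i = v : edge (v, u)
        exact hX i u (((hNm i u (by omega)).1).mpr (Or.inr (Or.inr huv)))
  · -- i = u
    have hiu : i = u := Fin.ext (by omega)
    subst hiu
    have hjm : j.val < m := by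
      have := vne hij
      omega
    rcases Nat.lt_or_ge (j.val + 1) m with hj1 | hj1
    · -- equation at (j, v)
      have heq := comm' j v
      have hLHS : (∑ k, A j k * X v k) = 0 := by
        refine Finset.sum_eq_zero ?_
        intro k _
        by_cases hAk : A j k = 0
        · simp [hAk]
        · have hE : (j, k) ∈ E := (hA j k).mp hAk
          have hkm : k.val < m := hclosed j hj1 k (Or.inl hE)
          simp [part1 v k hvm hkm]
      have hRHS : (∑ k, X k j * A k v) = X u j * A u v := by
        refine Finset.sum_eq_single_of_mem u (Finset.mem_univ u) ?_
        intro k _ hk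
        by_cases hAk : A k v = 0
        · simp [hAk]
        · have hE : (k, v) ∈ E := (hA k v).mp hAk
          have := ((hNm v k hvv).2).mp hE
          have hkm : k.val < m := by
            have := vne hk
            omega
          simp [part1 k j hkm hjm]
      have hAuv : A u v ≠ 0 :=
        (hA u v).mpr (((hNm v u hvv).2).mpr (Or.inr (Or.inr huv)))
      have := (heq.symm.trans hLHS).symm.trans hRHS
      rcases mul_eq_zero.mp this.symm with h | h
      · exact h
      · exact absurd h hAuv
    · -- j = v : edge (u, v)
      exact hX u j (((hNm j u (by omega)).2).mpr (Or.inr (Or.inr huv)))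
end

section
/- Let p ≥ 1, k ≥ 2, n = p + k, and let L ⊆ [n]. Let G be the double lollipop digraph on vertex set [n] with arc set E(G) = {(i,i+1), (i+1,i) : i ∈ [p]} ∪ {(i,j), (j,i) : p+1 ≤ i < j ≤ n} ∪ {(ℓ,ℓ) : ℓ ∈ L} (a double path on vertices 1,…,p+1 attached to a complete double-arc clique on vertices p+1,…,n, with loops exactly at the vertices in L). If [p+2] ⊆ L, then G requires the nSSP. -/
open Matrix

/-- The arc condition of the double lollipop digraph. -/
def lolCond (p k : ℕ) (L : Set (Fin (p + k))) (i j : Fin (p + k)) : Prop :=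
  (i.val ≤ p ∧ j.val ≤ p ∧ (i.val + 1 = j.val ∨ j.val + 1 = i.val)) ∨
  (p ≤ i.val ∧ p ≤ j.val ∧ i ≠ j) ∨ (i = j ∧ i ∈ L)

lemma lol_main {p k : ℕ} (hp : 1 ≤ p) (hk : 2 ≤ k) (L : Set (Fin (p + k)))
    (hL : ∀ i : Fin (p + k), i.val < p + 2 → i ∈ L)
    (A X : Matrix (Fin (p + k)) (Fin (p + k)) ℝ)
    (hA0 : ∀ i j, ¬ lolCond p k L i j → A i j = 0)
    (hAne : ∀ i j, lolCond p k L i j → A i j ≠ 0)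
    (hX0 : ∀ i j, lolCond p k L i j → X i j = 0)
    (hcomm : ∀ i j, ∑ t, A i t * X j t = ∑ t, X t i * A t j) :
    ∀ i j, X i j = 0 := by
  -- Step A: the block with both indices ≥ p vanishes.
  have base : ∀ i j : Fin (p + k), p ≤ i.val → p ≤ j.val → X i j = 0 := by
    intro i j hi hj
    by_cases hij : i = j
    · subst hij
      by_cases hi2 : i.val < p + 2
      · exact hX0 i i (Or.inr (Or.inr ⟨rfl, hL i hi2⟩))
      · push_neg at hi2
        have he1 : p + 1 < p + k := by omega
        set e : Fin (p + k) := ⟨p + 1, he1⟩ with he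
        have hev : e.val = p + 1 := rfl
        have h := hcomm i e
        have hLHS : ∑ t, A i t * X e t = 0 := by
          refine Finset.sum_eq_zero fun t _ => ?_
          rcases Nat.lt_or_ge t.val p with ht | ht
          · rw [hA0 i t, zero_mul]
            rintro (⟨h1, -, -⟩ | ⟨-, h2, -⟩ | ⟨h3, -⟩)
            · omega
            · omega
            · have := congrArg Fin.val h3; omega
          · rw [hX0 e t, mul_zero]
            by_cases hte : t = e
            · subst hte
              exact Or.inr (Or.inr ⟨rfl, hL e (by omega)⟩)
            · exact Or.inr (Or.inl ⟨by omega, ht, fun hh => hte hh.symm⟩)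
        have hRHS : ∑ t, X t i * A t e = X i i * A i e := by
          refine Finset.sum_eq_single_of_mem i (Finset.mem_univ i) fun t _ htne => ?_
          rcases Nat.lt_or_ge t.val p with ht | ht
          · rw [hA0 t e, mul_zero]
            rintro (⟨-, h1, -⟩ | ⟨h2, -, -⟩ | ⟨h3, -⟩)
            · omega
            · omega
            · have := congrArg Fin.val h3; omega
          · rw [hX0 t i, zero_mul]
            exact Or.inr (Or.inl ⟨ht, hi, htne⟩)
        rw [hLHS, hRHS] at h
        have hAie : A i e ≠ 0 := by
          refine hAne i e (Or.inr (Or.inl ⟨hi, by omega, fun hh => ?_⟩))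
          have := congrArg Fin.val hh; omega
        exact (mul_eq_zero.mp h.symm).resolve_right hAie
    · exact hX0 i j (Or.inr (Or.inl ⟨hi, hj, hij⟩))
  -- Step B: downward induction along the path.
  have main : ∀ m : ℕ, ∀ i j : Fin (p + k), p - m ≤ i.val → p - m ≤ j.val → X i j = 0 := by
    intro m
    induction m with
    | zero => intro i j hi hj; exact base i j (by omega) (by omega)
    | succ m ih =>
      intro i j hi hj
      by_cases hm : p ≤ m
      · exact ih i j (by omega) (by omega)
      · push_neg at hm
        set s := p - (m + 1) with hs
        have hs1 : s + 1 = p - m := by omega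
        have hsp : s + 1 ≤ p := by omega
        have hes : s + 1 < p + k := by omega
        set e : Fin (p + k) := ⟨s + 1, hes⟩ with he
        have hev : e.val = s + 1 := rfl
        rcases Nat.lt_or_ge i.val (s + 1) with hi1 | hi1
        · -- i.val = s
          have hi' : i.val = s := by omega
          rcases Nat.lt_or_ge j.val (s + 1) with hj1 | hj1
          · -- j.val = s : loop
            have hij : i = j := Fin.ext (by omega)
            exact hX0 i j (Or.inr (Or.inr ⟨hij, hL i (by omega)⟩))
          · rcases Nat.lt_or_ge j.val (s + 2) with hj2 | hj2
            · -- j.val = s + 1 : path arc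
              exact hX0 i j (Or.inl ⟨by omega, by omega, Or.inl (by omega)⟩)
            · -- j.val ≥ s + 2 : commutator entry (j, e)
              have h := hcomm j e
              have hLHS : ∑ t, A j t * X e t = 0 := by
                refine Finset.sum_eq_zero fun t _ => ?_
                rcases Nat.lt_or_ge t.val (s + 1) with ht | ht
                · rw [hA0 j t, zero_mul]
                  rintro (⟨-, -, h1 | h1⟩ | ⟨-, h2, -⟩ | ⟨h3, -⟩)
                  · omega
                  · omega
                  · omega
                  · have := congrArg Fin.val h3; omega
                · rw [ih e t (by omega) (by omega), mul_zero]
              have hRHS : ∑ t, X t j * A t e = X i j * A i e := by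
                refine Finset.sum_eq_single_of_mem i (Finset.mem_univ i) fun t _ htne => ?_
                rcases Nat.lt_or_ge t.val (s + 1) with ht | ht
                · have htns : t.val ≠ s := fun hh => htne (Fin.ext (by omega))
                  rw [hA0 t e, mul_zero]
                  rintro (⟨-, -, h1 | h1⟩ | ⟨h2, -, -⟩ | ⟨h3, -⟩)
                  · omega
                  · omega
                  · omega
                  · have := congrArg Fin.val h3; omega
                · rw [ih t j (by omega) (by omega), zero_mul]
              rw [hLHS, hRHS] at h
              have hAie : A i e ≠ 0 :=
                hAne i e (Or.inl ⟨by omega, by omega, Or.inl (by omega)⟩)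
              exact (mul_eq_zero.mp h.symm).resolve_right hAie
        · rcases Nat.lt_or_ge j.val (s + 1) with hj1 | hj1
          · -- j.val = s
            have hj' : j.val = s := by omega
            rcases Nat.lt_or_ge i.val (s + 2) with hi2 | hi2
            · -- i.val = s + 1 : path arc
              exact hX0 i j (Or.inl ⟨by omega, by omega, Or.inr (by omega)⟩)
            · -- i.val ≥ s + 2 : commutator entry (e, i)
              have h := hcomm e i
              have hRHS : ∑ t, X t e * A t i = 0 := by
                refine Finset.sum_eq_zero fun t _ => ?_
                rcases Nat.lt_or_ge t.val (s + 1) with ht | ht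
                · rw [hA0 t i, mul_zero]
                  rintro (⟨-, -, h1 | h1⟩ | ⟨h2, -, -⟩ | ⟨h3, -⟩)
                  · omega
                  · omega
                  · omega
                  · have := congrArg Fin.val h3; omega
                · rw [ih t e (by omega) (by omega), zero_mul]
              have hLHS : ∑ t, A e t * X i t = A e j * X i j := by
                refine Finset.sum_eq_single_of_mem j (Finset.mem_univ j) fun t _ htne => ?_
                rcases Nat.lt_or_ge t.val (s + 1) with ht | ht
                · have htns : t.val ≠ s := fun hh => htne (Fin.ext (by omega))
                  rw [hA0 e t, zero_mul]
                  rintro (⟨-, -, h1 | h1⟩ | ⟨-, h2, -⟩ | ⟨h3, -⟩)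
                  · omega
                  · omega
                  · omega
                  · have := congrArg Fin.val h3; omega
                · rw [ih i t (by omega) (by omega), mul_zero]
              rw [hLHS, hRHS] at h
              have hAej : A e j ≠ 0 :=
                hAne e j (Or.inl ⟨by omega, by omega, Or.inr (by omega)⟩)
              exact (mul_eq_zero.mp h).resolve_left hAej
          · exact ih i j (by omega) (by omega)
  intro i j
  exact main p i j (by omega) (by omega)

/-- the double lollipop digraph (a double path on 1-based vertices `1,…,p+1`
attached to a complete double-arc clique on `p+1,…,p+k`, with loops exactly at `L`)
requires the nSSP whenever `[p+2] ⊆ L`. Vertices are 0-indexed (`Fin` index `a` is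
1-based vertex `a+1`). -/
theorem double_lollipop_requires_nSSP {p k : ℕ} (hp : 1 ≤ p) (hk : 2 ≤ k)
    (L : Set (Fin (p + k)))
    (hL : ∀ i : Fin (p + k), i.val < p + 2 → i ∈ L) :
    RequiresNSSP
      {q : Fin (p + k) × Fin (p + k) |
        (q.1.val ≤ p ∧ q.2.val ≤ p ∧ (q.1.val + 1 = q.2.val ∨ q.2.val + 1 = q.1.val)) ∨
        (p ≤ q.1.val ∧ p ≤ q.2.val ∧ q.1 ≠ q.2) ∨
        (q.1 = q.2 ∧ q.1 ∈ L)} := by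
  intro A hA X hX1 hX2
  have hA' : ∀ i j, A i j ≠ 0 ↔ lolCond p k L i j := fun i j => hA i j
  have hcomm : ∀ i j, ∑ t, A i t * X j t = ∑ t, X t i * A t j := by
    intro i j
    have h : A * Xᵀ = Xᵀ * A := sub_eq_zero.mp hX2
    have h2 : (A * Xᵀ) i j = (Xᵀ * A) i j := by rw [h]
    simpa [Matrix.mul_apply, Matrix.transpose_apply] using h2
  have hA0 : ∀ i j, ¬ lolCond p k L i j → A i j = 0 := fun i j hn => by
    by_contra h0; exact hn ((hA' i j).mp h0)
  have hX0 : ∀ i j, lolCond p k L i j → X i j = 0 := fun i j hc => by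
    rcases mul_eq_zero.mp (hX1 i j) with h' | h'
    · exact absurd h' ((hA' i j).mpr hc)
    · exact h'
  have hfin := lol_main hp hk L hL A X hA0 (fun i j hc => (hA' i j).mpr hc) hX0 hcomm
  ext i j
  simpa using hfin i j
end

section
/- Let 1 ≤ m < n and let G be a digraph on [n] such that: for all i, j ∈ [m], (i,j) ∈ E(G) if and only if |i−j| = 1 (so the induced subdigraph on [m] is the loopless double path), and N_G[i] ⊆ [m] for all i ∈ [m−1]. If A ∈ M(G) and X is a real n×n matrix with X_{uv} = 0 for all (u,v) ∈ E(G) and A Xᵀ − Xᵀ A = O, then X_{ij} = 0 for all 1 ≤ i, j ≤ m with |i−j| odd. Moreover, if additionally N⁺_G[m] = N⁻_G[m] = {m−1, m+1} and (m+1, m+1) ∈ E(G), then X_{ij} = 0 for all 1 ≤ i, j ≤ m+1 with |i−j| odd. -/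
open Matrix

/-- pendent loopless double path lemma. Vertices are 0-indexed:
`Fin` index `a` is 1-based vertex `a+1`; so 1-based `[m]` is `{a | a.val < m}`,
the 1-based vertex `m` is the index with `val + 1 = m`, and `m+1` the index with `val = m`. -/
theorem pendent_loopless_path_zeros {n m : ℕ} (hm : 1 ≤ m) (hmn : m < n)
    (E : Set (Fin n × Fin n))
    (hpath : ∀ i j : Fin n, i.val < m → j.val < m →
      ((i, j) ∈ E ↔ (i.val + 1 = j.val ∨ j.val + 1 = i.val)))
    (hclosed : ∀ i : Fin n, i.val + 1 < m → ∀ w : Fin n,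
      ((i, w) ∈ E ∨ (w, i) ∈ E) → w.val < m)
    (A : Matrix (Fin n) (Fin n) ℝ) (hA : MemPattern E A)
    (X : Matrix (Fin n) (Fin n) ℝ)
    (hX : ∀ u v : Fin n, (u, v) ∈ E → X u v = 0)
    (hcomm : A * Xᵀ - Xᵀ * A = 0) :
    (∀ i j : Fin n, i.val < m → j.val < m → Odd (Nat.dist i.val j.val) → X i j = 0) ∧
    ((∀ v w : Fin n, v.val + 1 = m →
        (((v, w) ∈ E ↔ (w.val + 2 = m ∨ w.val = m)) ∧
         ((w, v) ∈ E ↔ (w.val + 2 = m ∨ w.val = m)))) →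
      (∀ v : Fin n, v.val = m → (v, v) ∈ E) →
      ∀ i j : Fin n, i.val < m + 1 → j.val < m + 1 → Odd (Nat.dist i.val j.val) → X i j = 0) := by
  have hdist : ∀ a b : ℕ, Nat.dist a b = a - b + (b - a) := fun _ _ => rfl
  -- A vanishes off E
  have hA0 : ∀ u v : Fin n, (u, v) ∉ E → A u v = 0 := by
    intro u v h
    by_contra hne
    exact h ((hA u v).mp hne)
  -- the commutator equations
  have key : ∀ p q : Fin n, ∑ k, A p k * X q k = ∑ k, X k p * A k q := by
    intro p q
    have h0 : (A * Xᵀ - Xᵀ * A) p q = 0 := by rw [hcomm]; rfl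
    simpa [Matrix.mul_apply, Matrix.sub_apply, Matrix.transpose_apply,
      sub_eq_zero] using h0
  have force : ∀ p q t : Fin n, A p t ≠ 0 →
      (∀ k : Fin n, k ≠ t → A p k * X q k = 0) →
      (∀ k : Fin n, X k p * A k q = 0) → X q t = 0 := by
    intro p q t hAt h1 h2
    have h := key p q
    have e1 : ∑ k, A p k * X q k = A p t * X q t :=
      Finset.sum_eq_single t (fun b _ hb => h1 b hb)
        (fun hh => absurd (Finset.mem_univ t) hh)
    have e2 : ∑ k, X k p * A k q = 0 := Finset.sum_eq_zero (fun k _ => h2 k)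
    rw [e1, e2] at h
    exact (mul_eq_zero.mp h).resolve_left hAt
  have force' : ∀ p q t : Fin n, A t q ≠ 0 →
      (∀ k : Fin n, k ≠ t → X k p * A k q = 0) →
      (∀ k : Fin n, A p k * X q k = 0) → X t p = 0 := by
    intro p q t hAt h1 h2
    have h := key p q
    have e1 : ∑ k, X k p * A k q = X t p * A t q :=
      Finset.sum_eq_single t (fun b _ hb => h1 b hb)
        (fun hh => absurd (Finset.mem_univ t) hh)
    have e2 : ∑ k, A p k * X q k = 0 := Finset.sum_eq_zero (fun k _ => h2 k)
    rw [e1, e2] at h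
    exact (mul_eq_zero.mp h.symm).resolve_right hAt
  -- row/column support of A at protected path vertices
  have hrow : ∀ p k : Fin n, p.val + 1 < m → A p k ≠ 0 →
      k.val < m ∧ (p.val + 1 = k.val ∨ k.val + 1 = p.val) := by
    intro p k hp hz
    have he := (hA p k).mp hz
    have hkm := hclosed p hp k (Or.inl he)
    have h' := (hpath p k (by omega) hkm).mp he
    exact ⟨hkm, by tauto⟩
  have hcol : ∀ q k : Fin n, q.val + 1 < m → A k q ≠ 0 →
      k.val < m ∧ (k.val + 1 = q.val ∨ q.val + 1 = k.val) := by
    intro q k hq hz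
    have he := (hA k q).mp hz
    have hkm := hclosed q hq k (Or.inr he)
    have h' := (hpath k q hkm (by omega)).mp he
    exact ⟨hkm, by tauto⟩
  have hAadj : ∀ u v : Fin n, u.val < m → v.val < m →
      (u.val + 1 = v.val ∨ v.val + 1 = u.val) → A u v ≠ 0 := by
    intro u v hu hv h
    exact (hA u v).mpr ((hpath u v hu hv).mpr h)
  -- Part 1
  have part1 : ∀ d : ℕ, Odd d → ∀ i j : Fin n, i.val < m → j.val < m →
      Nat.dist i.val j.val = d → X i j = 0 := by
    intro d
    induction d using Nat.strong_induction_on with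
    | _ d IH =>
    intro hd i j hi hj hij
    have hd1 : d % 2 = 1 := Nat.odd_iff.mp hd
    by_cases hd3 : d = 1
    · have h' : i.val + 1 = j.val ∨ j.val + 1 = i.val := by
        have := hdist i.val j.val; omega
      exact hX i j ((hpath i j hi hj).mpr h')
    · have hd3' : 3 ≤ d := by omega
      have IH2 : ∀ i j : Fin n, i.val < m → j.val < m →
          Nat.dist i.val j.val = d - 2 → X i j = 0 := by
        intro i j hi hj h
        exact IH (d - 2) (by omega) (Nat.odd_iff.mpr (by omega)) i j hi hj h
      -- high-low chain: X_{u+d, u} = 0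
      have chainH : ∀ u : ℕ, ∀ i j : Fin n, j.val = u → i.val = u + d →
          i.val < m → X i j = 0 := by
        intro u
        induction u using Nat.strong_induction_on with
        | _ u IHu =>
        intro i j hj hi him
        obtain ⟨qf, hqv⟩ : ∃ qf : Fin n, qf.val = u + d - 1 :=
          ⟨⟨u + d - 1, by omega⟩, rfl⟩
        apply force' j qf i
        · exact hAadj i qf (by omega) (by omega) (Or.inr (by omega))
        · intro k hk
          by_cases hz : A k qf = 0
          · rw [hz, mul_zero]
          · obtain ⟨hkm, h'⟩ := hcol qf k (by omega) hz
            rcases h' with h' | h'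
            · rw [IH2 k j (by omega) (by omega) (by rw [hdist]; omega), zero_mul]
            · exact absurd (Fin.val_injective (show k.val = i.val by omega)) hk
        · intro k
          by_cases hz : A j k = 0
          · rw [hz, zero_mul]
          · obtain ⟨hkm, h'⟩ := hrow j k (by omega) hz
            rcases h' with h' | h'
            · rw [IH2 qf k (by omega) (by omega) (by rw [hdist]; omega), mul_zero]
            · rw [IHu k.val (by omega) qf k (by omega) (by omega) (by omega),
                mul_zero]
      -- low-high chain: X_{u, u+d} = 0
      have chainL : ∀ u : ℕ, ∀ i j : Fin n, i.val = u → j.val = u + d →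
          j.val < m → X i j = 0 := by
        intro u
        induction u using Nat.strong_induction_on with
        | _ u IHu =>
        intro i j hiu hju hjm
        obtain ⟨pf, hpv⟩ : ∃ pf : Fin n, pf.val = u + d - 1 :=
          ⟨⟨u + d - 1, by omega⟩, rfl⟩
        apply force pf i j
        · exact hAadj pf j (by omega) (by omega) (Or.inl (by omega))
        · intro k hk
          by_cases hz : A pf k = 0
          · rw [hz, zero_mul]
          · obtain ⟨hkm, h'⟩ := hrow pf k (by omega) hz
            rcases h' with h' | h'
            · exact absurd (Fin.val_injective (show k.val = j.val by omega)) hk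
            · rw [IH2 i k (by omega) (by omega) (by rw [hdist]; omega), mul_zero]
        · intro k
          by_cases hz : A k i = 0
          · rw [hz, mul_zero]
          · obtain ⟨hkm, h'⟩ := hcol i k (by omega) hz
            rcases h' with h' | h'
            · rw [IHu k.val (by omega) k pf (by omega) (by omega) (by omega),
                zero_mul]
            · rw [IH2 k pf (by omega) (by omega) (by rw [hdist]; omega), zero_mul]
      rcases Nat.le_total i.val j.val with h | h
      · exact chainL i.val i j rfl (by rw [hdist] at hij; omega) hj
      · exact chainH j.val i j rfl (by rw [hdist] at hij; omega) hi
  refine ⟨fun i j hi hj ho => part1 _ ho i j hi hj rfl, ?_⟩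
  -- Part 2
  intro hmid _hloop i j hi hj ho
  have hod : Nat.dist i.val j.val % 2 = 1 := Nat.odd_iff.mp ho
  rw [hdist] at hod
  by_cases him : i.val < m
  · by_cases hjm : j.val < m
    · exact part1 _ ho i j him hjm rfl
    · -- j is the vertex with val = m
      have hjv : j.val = m := by omega
      by_cases hd1 : i.val + 1 = m
      · exact hX i j (((hmid i j hd1).1).mpr (Or.inr hjv))
      · have hd3 : i.val + 3 ≤ m := by omega
        obtain ⟨pf, hpv⟩ : ∃ pf : Fin n, pf.val = m - 1 :=
          ⟨⟨m - 1, by omega⟩, rfl⟩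
        apply force pf i j
        · exact (hA pf j).mpr (((hmid pf j (by omega)).1).mpr (Or.inr hjv))
        · intro k hk
          by_cases hz : A pf k = 0
          · rw [hz, zero_mul]
          · have h' := ((hmid pf k (by omega)).1).mp ((hA pf k).mp hz)
            rcases h' with h' | h'
            · rw [part1 _ (Nat.odd_iff.mpr (by rw [hdist]; omega)) i k him
                (by omega) rfl, mul_zero]
            · exact absurd (Fin.val_injective (show k.val = j.val by omega)) hk
        · intro k
          by_cases hz : A k i = 0
          · rw [hz, mul_zero]
          · obtain ⟨hkm, h'⟩ := hcol i k (by omega) hz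
            rw [part1 _ (Nat.odd_iff.mpr (by rw [hdist]; omega)) k pf hkm
              (by omega) rfl, zero_mul]
  · -- i is the vertex with val = m
    have hiv : i.val = m := by omega
    by_cases hjm : j.val < m
    · by_cases hd1 : j.val + 1 = m
      · exact hX i j (((hmid j i hd1).2).mpr (Or.inr hiv))
      · have hd3 : j.val + 3 ≤ m := by omega
        obtain ⟨pf, hpv⟩ : ∃ pf : Fin n, pf.val = m - 1 :=
          ⟨⟨m - 1, by omega⟩, rfl⟩
        apply force' j pf i
        · exact (hA i pf).mpr (((hmid pf i (by omega)).2).mpr (Or.inr hiv))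
        · intro k hk
          by_cases hz : A k pf = 0
          · rw [hz, mul_zero]
          · have h' := ((hmid pf k (by omega)).2).mp ((hA k pf).mp hz)
            rcases h' with h' | h'
            · rw [part1 _ (Nat.odd_iff.mpr (by rw [hdist]; omega)) k j
                (by omega) hjm rfl, zero_mul]
            · exact absurd (Fin.val_injective (show k.val = i.val by omega)) hk
        · intro k
          by_cases hz : A j k = 0
          · rw [hz, zero_mul]
          · obtain ⟨hkm, h'⟩ := hrow j k (by omega) hz
            rw [part1 _ (Nat.odd_iff.mpr (by rw [hdist]; omega)) pf k
              (by omega) hkm rfl, mul_zero]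
    · exact absurd hod (by omega)
end

section
/- Let m, n ∈ ℕ with 1 ≤ m < n, let L ⊆ [n] with [m] ⊆ L and m+1 ∉ L, and let G = P_{n,L} be the double path with loop assignment L. If A ∈ M(G) and X is a real n×n matrix with X_{uv} = 0 for all (u,v) ∈ E(G) and A Xᵀ − Xᵀ A = O, then X_{ij} = 0 for all i, j ∈ [n] with i + j ≤ 2m + 1. -/
open Matrix

lemma mem_dp_iff {n : ℕ} {L : Set (Fin n)} {u v : Fin n} :
    (u, v) ∈ doublePathE n L ↔
      (u.val + 1 = v.val ∨ v.val + 1 = u.val ∨ (u = v ∧ u ∈ L)) := Iff.rfl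

lemma doublePathE_symm {n : ℕ} {L : Set (Fin n)} {u v : Fin n}
    (h : (u, v) ∈ doublePathE n L) : (v, u) ∈ doublePathE n L := by
  rcases mem_dp_iff.mp h with h | h | ⟨h1, h2⟩
  · exact mem_dp_iff.mpr (Or.inr (Or.inl h))
  · exact mem_dp_iff.mpr (Or.inl h)
  · exact mem_dp_iff.mpr (Or.inr (Or.inr ⟨h1.symm, h1 ▸ h2⟩))

lemma key_upper {n m : ℕ} (hm : 1 ≤ m) (L : Set (Fin n))
    (hL1 : ∀ i : Fin n, i.val < m → i ∈ L)
    (B : Matrix (Fin n) (Fin n) ℝ) (hB : MemPattern (doublePathE n L) B)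
    (W : Matrix (Fin n) (Fin n) ℝ)
    (hW : ∀ u v : Fin n, (u, v) ∈ doublePathE n L → W u v = 0)
    (hBW : B * W = W * B) :
    ∀ s d : ℕ, ∀ p q : Fin n, p.val ≤ q.val → p.val + q.val + 2 ≤ 2 * m + 1 →
      p.val + q.val = s → q.val - p.val = d → W p q = 0 := by
  intro s
  induction s using Nat.strong_induction_on with
  | _ s ihs =>
  intro d
  induction d using Nat.strong_induction_on with
  | _ d ihd =>
  intro p q hpq hsum hs hd
  rcases Nat.lt_or_ge q.val (p.val + 2) with hsmall | hbig
  · -- q = p or q = p+1 : pattern positions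
    rcases Nat.lt_or_ge q.val (p.val + 1) with h0 | h1
    · have hpqe : p = q := Fin.val_injective (by omega)
      subst hpqe
      exact hW p p (mem_dp_iff.mpr (Or.inr (Or.inr ⟨rfl, hL1 p (by omega)⟩)))
    · exact hW p q (mem_dp_iff.mpr (Or.inl (by omega)))
  · -- main case: q ≥ p + 2
    have hq2 : 2 ≤ q.val := by omega
    have hkn : q.val - 1 < n := by omega
    set k : Fin n := ⟨q.val - 1, hkn⟩ with hkdef
    have hk : (k : ℕ) + 1 = q.val := by simp [hkdef]; omega
    have heq : ∑ j, B p j * W j k = ∑ j, W p j * B j k := by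
      have h := congrFun (congrFun hBW p) k
      simpa [Matrix.mul_apply] using h
    have hLzero : ∑ j, B p j * W j k = 0 := by
      apply Finset.sum_eq_zero
      intro j _
      by_cases hBj : B p j = 0
      · simp [hBj]
      · rcases mem_dp_iff.mp ((hB p j).mp hBj) with h1 | h2 | ⟨h3, _⟩
        · -- j = p + 1
          have : W j k = 0 :=
            ihd (d - 2) (by omega) j k (by omega) (by omega) (by omega) (by omega)
          simp [this]
        · -- j = p - 1
          have : W j k = 0 :=
            ihs (s - 2) (by omega) (k.val - j.val) j k (by omega) (by omega)
              (by omega) rfl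
          simp [this]
        · -- j = p, loop
          have hjp : j = p := h3.symm
          subst hjp
          have : W j k = 0 :=
            ihs (s - 1) (by omega) (k.val - j.val) j k (by omega) (by omega)
              (by omega) rfl
          simp [this]
    have hRzero : ∑ j, W p j * B j k = W p q * B q k := by
      apply Finset.sum_eq_single q
      · intro j _ hjq
        by_cases hBj : B j k = 0
        · simp [hBj]
        · rcases mem_dp_iff.mp ((hB j k).mp hBj) with h1 | h2 | ⟨h3, _⟩
          · -- j = k - 1 = q - 2
            have : W p j = 0 :=
              ihs (s - 2) (by omega) (j.val - p.val) p j (by omega) (by omega)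
                (by omega) rfl
            simp [this]
          · -- j = k + 1 = q
            exact absurd (Fin.val_injective (by omega : j.val = q.val)) hjq
          · -- j = k, loop
            subst h3
            have : W p k = 0 :=
              ihs (s - 1) (by omega) (k.val - p.val) p k (by omega) (by omega)
                (by omega) rfl
            simp [this]
      · intro h
        exact absurd (Finset.mem_univ q) h
    have hmain : W p q * B q k = 0 := by rw [← hRzero, ← heq, hLzero]
    have hBqk : B q k ≠ 0 := (hB q k).mpr (mem_dp_iff.mpr (Or.inr (Or.inl hk)))
    exact (mul_eq_zero.mp hmain).resolve_right hBqk

/-- on a double path whose first `m` (1-based) vertices are looped and whose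
vertex `m+1` is loopless, any `X` vanishing on the pattern and commuting with `Aᵀ`-wise
vanishes at all positions `(i,j)` (1-based) with `i + j ≤ 2m + 1`. Vertices are 0-indexed,
so 1-based labels are `val + 1`. -/
theorem double_path_initial_loops_zeros {n m : ℕ} (hm : 1 ≤ m) (hmn : m < n)
    (L : Set (Fin n))
    (hL1 : ∀ i : Fin n, i.val < m → i ∈ L)
    (hL2 : ∀ i : Fin n, i.val = m → i ∉ L)
    (A : Matrix (Fin n) (Fin n) ℝ) (hA : MemPattern (doublePathE n L) A)
    (X : Matrix (Fin n) (Fin n) ℝ)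
    (hX : ∀ u v : Fin n, (u, v) ∈ doublePathE n L → X u v = 0)
    (hcomm : A * Xᵀ - Xᵀ * A = 0) :
    ∀ i j : Fin n, (i.val + 1) + (j.val + 1) ≤ 2 * m + 1 → X i j = 0 := by
  have hAX : A * Xᵀ = Xᵀ * A := sub_eq_zero.mp hcomm
  have hAX2 : Aᵀ * X = X * Aᵀ := by
    have h := congrArg Matrix.transpose hAX
    simpa [Matrix.transpose_mul] using h.symm
  have hAT : MemPattern (doublePathE n L) Aᵀ := by
    intro i j
    exact (hA j i).trans ⟨doublePathE_symm, doublePathE_symm⟩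
  have hXT : ∀ u v : Fin n, (u, v) ∈ doublePathE n L → Xᵀ u v = 0 := by
    intro u v huv
    exact hX v u (doublePathE_symm huv)
  intro i j hij
  rcases Nat.le_total i.val j.val with h | h
  · exact key_upper hm L hL1 Aᵀ hAT X hX hAX2 (i.val + j.val) (j.val - i.val) i j h
      (by omega) rfl rfl
  · exact key_upper hm L hL1 A hA Xᵀ hXT hAX (j.val + i.val) (i.val - j.val) j i h
      (by omega) rfl rfl
end

section
/- Let n ∈ ℕ, let L ⊆ [n], and let m be the maximal integer such that [m] ⊆ L (that is, [m] ⊆ L and either m = n or m+1 ∉ L). If 2m > n − 1, then the double path P_{n,L} requires the nSSP. -/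
open Matrix

/-!
An unreduced tridiagonal matrix `A` has `e₀` as a cyclic vector for both `A` and `Aᵀ`: there are
polynomials `qⱼ`, `rᵢ` of degree `j`, `i` with `qⱼ(A) e₀ = eⱼ` and `e₀ᵀ rᵢ(A) = eᵢᵀ`. If `Y`
commutes with `A`, then `Yᵢⱼ = ((rᵢ qⱼ)(A) Y)₀₀`, so the linear functional `p ↦ (p(A) Y)₀₀` on
`K[X]` vanishes on `rᵢ qᵢ` (degree `2i`) when `Yᵢᵢ = 0`, on `rᵢ qᵢ₊₁` (degree `2i + 1`) when
`Yᵢ,ᵢ₊₁ = 0`, and, by Cayley–Hamilton, on multiples of the characteristic polynomial (degree `≥ n`).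
For `Y = Xᵀ` the condition `A ∘ X = O` gives exactly these zeros for `i < m`, and `n ≤ 2m` makes
them cover every degree, so the functional is zero and hence `Y = 0`.
-/

open Polynomial

section

variable {K : Type*} [Field K] {n : ℕ}

structure Matrix.IsUnreducedUpperHessenberg (A : Matrix (Fin n) (Fin n) K) : Prop where
  eq_zero_of_lt : ∀ i j : Fin n, j.val + 1 < i.val → A i j = 0
  subdiag_ne_zero : ∀ i j : Fin n, i.val = j.val + 1 → A i j ≠ 0

namespace Matrix.IsUnreducedUpperHessenberg

variable {A : Matrix (Fin n) (Fin n) K}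

theorem mulVec_single_one_eq (hA : IsUnreducedUpperHessenberg A) {i j : Fin n}
    (hij : i.val = j.val + 1) :
    A *ᵥ Pi.single j 1 = A i j • Pi.single i 1 + ∑ k ∈ Finset.Iic j, A k j • Pi.single k 1 := by
  ext t
  simp only [mulVec_single_one, Pi.add_apply, Pi.smul_apply, Finset.sum_apply, Pi.single_apply,
    smul_eq_mul, mul_ite, mul_one, mul_zero]
  rcases lt_trichotomy t.val (j.val + 1) with h | h | h
  · have : t ≠ i := fun e => by omega
    have : t ≤ j := Fin.le_def.mpr (by omega)
    simp [*]
  · have : t = i := Fin.ext (by omega)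
    subst this
    have : ¬ t ≤ j := by rw [Fin.le_def]; omega
    simp [*]
  · have : t ≠ i := fun e => by omega
    have : ¬ t ≤ j := by rw [Fin.le_def]; omega
    simp [*, hA.eq_zero_of_lt t j h]

theorem exists_aeval_mulVec_single [NeZero n] (hA : IsUnreducedUpperHessenberg A) (j : Fin n) :
    ∃ q : K[X], q.degree = j.val ∧ aeval A q *ᵥ Pi.single 0 1 = Pi.single j 1 := by
  induction j using Fin.strong_induction_on with | _ j ih
  obtain ⟨_ | k, hj⟩ := j
  · exact ⟨1, by simp, by rw [map_one, one_mulVec]; rfl⟩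
  set i : Fin n := ⟨k, by omega⟩
  have : ∀ l : Fin n, ∃ q : K[X],
      l ≤ i → q.degree = l.val ∧ aeval A q *ᵥ Pi.single 0 1 = Pi.single l 1 := fun l =>
    if hl : l ≤ i then (ih l (Nat.lt_succ_of_le hl)).imp fun _ h _ => h
    else ⟨0, fun h => absurd h hl⟩
  choose q hq using this
  set a := A ⟨k + 1, hj⟩ i
  have ha : a ≠ 0 := hA.subdiag_ne_zero _ _ rfl
  set s := ∑ l ∈ Finset.Iic i, A l i • q l
  have hs : s.degree < (k + 1 : ℕ) := by
    refine (degree_sum_le _ _).trans_lt ((Finset.sup_lt_iff (WithBot.bot_lt_coe _)).mpr ?_)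
    intro l hl
    refine (degree_smul_le _ _).trans_lt ?_
    have hli : l ≤ i := Finset.mem_Iic.mp hl
    rw [(hq l hli).1]
    exact_mod_cast Nat.lt_succ_of_le hli
  have hXq : (X * q i).degree = ((k + 1 : ℕ) : WithBot ℕ) := by
    rw [X_mul, degree_mul_X, (hq i le_rfl).1]; rfl
  refine ⟨a⁻¹ • (X * q i - s), ?_, ?_⟩
  · rw [smul_eq_C_mul, degree_C_mul (inv_ne_zero ha),
      degree_sub_eq_left_of_degree_lt (hXq ▸ hs), hXq]
  · simp only [map_smul, map_sub, map_mul, aeval_X, map_sum, s, smul_mulVec, sub_mulVec,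
      sum_mulVec, ← mulVec_mulVec, (hq i le_rfl).2]
    rw [Finset.sum_congr rfl fun l hl => by rw [(hq l (Finset.mem_Iic.mp hl)).2],
      hA.mulVec_single_one_eq (i := ⟨k + 1, hj⟩) rfl, add_sub_cancel_right, smul_smul,
      inv_mul_cancel₀ ha, one_smul]

end Matrix.IsUnreducedUpperHessenberg

theorem Matrix.aeval_transpose (A : Matrix (Fin n) (Fin n) K) (p : K[X]) :
    aeval Aᵀ p = (aeval A p)ᵀ := by
  induction p using Polynomial.induction_on' with
  | add p q hp hq => simp [hp, hq]
  | monomial k a => simp [aeval_monomial, ← Algebra.smul_def, transpose_pow]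

theorem Polynomial.eq_zero_of_forall_exists_degree_eq {V : Type*} [AddCommGroup V] [Module K V]
    (M : K[X] →ₗ[K] V) (h : ∀ d : ℕ, ∃ p : K[X], p.degree = d ∧ M p = 0) : M = 0 := by
  choose S hS hM using h
  exact LinearMap.ext_on_range (Sequence.span ⟨S, hS⟩ fun i => by simp [← degree_ne_bot, hS])
    (by simpa using hM)

theorem Matrix.apply_eq_aeval_mul_apply [NeZero n] {A Y : Matrix (Fin n) (Fin n) K}
    (hAY : Commute A Y) {i j : Fin n} {r q : K[X]} (hr : Pi.single 0 1 ᵥ* aeval A r = Pi.single i 1)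
    (hq : aeval A q *ᵥ Pi.single 0 1 = Pi.single j 1) :
    Y i j = (aeval A (r * q) * Y) 0 0 := by
  have hYq : Commute Y (aeval A q) :=
    Algebra.commute_of_mem_adjoin_singleton_of_commute (aeval_mem_adjoin_singleton K A) hAY.symm
  calc Y i j = Pi.single i 1 ⬝ᵥ (Y *ᵥ Pi.single j 1) := by simp
    _ = Pi.single 0 1 ⬝ᵥ ((aeval A r * (Y * aeval A q)) *ᵥ Pi.single 0 1) := by
      rw [← hr, ← hq, ← dotProduct_mulVec, mulVec_mulVec, mulVec_mulVec, mul_assoc]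
    _ = (aeval A (r * q) * Y) 0 0 := by
      rw [hYq.eq, ← mul_assoc, ← map_mul]; simp

theorem Matrix.eq_zero_of_commute_of_tridiagonal {m : ℕ} (hnm : n ≤ 2 * m)
    {A Y : Matrix (Fin n) (Fin n) K} (hA : A.IsUnreducedUpperHessenberg)
    (hAt : Aᵀ.IsUnreducedUpperHessenberg) (hAY : Commute A Y)
    (hY_super : ∀ i j : Fin n, j.val = i.val + 1 → Y i j = 0)
    (hY_diag : ∀ i : Fin n, i.val < m → Y i i = 0) : Y = 0 := by
  ext i j
  have : NeZero n := ⟨i.pos.ne'⟩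
  choose q hq_deg hq using hA.exists_aeval_mulVec_single
  choose r hr_deg hr using hAt.exists_aeval_mulVec_single
  have hr' : ∀ i, Pi.single 0 1 ᵥ* aeval A (r i) = Pi.single i 1 := fun i => by
    rw [← mulVec_transpose, ← aeval_transpose, hr]
  have hentry : ∀ i j, Y i j = (aeval A (r i * q j) * Y) 0 0 := fun i j =>
    apply_eq_aeval_mul_apply hAY (hr' i) (hq j)
  let M : K[X] →ₗ[K] K :=
    entryLinearMap K K 0 0 ∘ₗ LinearMap.mulRight K Y ∘ₗ (aeval A).toLinearMap
  have hM : M = 0 := by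
    refine eq_zero_of_forall_exists_degree_eq M fun d => ?_
    rcases lt_or_ge d n with hd | hd
    · obtain ⟨k, rfl | rfl⟩ := Nat.even_or_odd' d
      · refine ⟨r ⟨k, by omega⟩ * q ⟨k, by omega⟩, ?_, ?_⟩
        · rw [degree_mul, hr_deg, hq_deg]; norm_cast; dsimp only; omega
        · exact (hentry _ _).symm.trans (hY_diag ⟨k, _⟩ (show k < m by omega))
      · refine ⟨r ⟨k, by omega⟩ * q ⟨k + 1, by omega⟩, ?_, ?_⟩
        · rw [degree_mul, hr_deg, hq_deg]; norm_cast; dsimp only; omega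
        · exact (hentry _ _).symm.trans (hY_super _ _ rfl)
    · refine ⟨X ^ (d - n) * A.charpoly, ?_, ?_⟩
      · rw [degree_mul, degree_X_pow, charpoly_degree_eq_dim, Fintype.card_fin]; norm_cast; omega
      · simp [M, aeval_self_charpoly]
  rw [hentry, zero_apply]
  exact LinearMap.congr_fun hM _

end

theorem MemPattern.doublePathE_transpose {n : ℕ} {L : Set (Fin n)} {A : Matrix (Fin n) (Fin n) ℝ}
    (hA : MemPattern (doublePathE n L) A) : MemPattern (doublePathE n L) Aᵀ := by
  intro i j
  rw [transpose_apply, hA j i]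
  simp only [doublePathE, Set.mem_ofPred_eq]
  grind

theorem MemPattern.doublePathE_isUnreducedUpperHessenberg {n : ℕ} {L : Set (Fin n)}
    {A : Matrix (Fin n) (Fin n) ℝ} (hA : MemPattern (doublePathE n L) A) :
    A.IsUnreducedUpperHessenberg where
  eq_zero_of_lt i j h := by
    by_contra hne
    have := (hA i j).mp hne
    simp only [doublePathE, Set.mem_ofPred_eq] at this
    grind
  subdiag_ne_zero i j h := (hA i j).mpr (Or.inr (Or.inl h.symm))

theorem double_path_many_initial_loops_requires_nSSP_general {n m : ℕ}
    (L : Set (Fin n))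
    (hL1 : ∀ i : Fin n, i.val < m → i ∈ L)
    (hbig : n - 1 < 2 * m) :
    RequiresNSSP (doublePathE n L) := by
  intro A hA X hAX hcomm
  have hX : ∀ i j, (i, j) ∈ doublePathE n L → X i j = 0 := fun i j hij =>
    (mul_eq_zero.mp (hAX i j)).resolve_left ((hA i j).mpr hij)
  rw [← transpose_eq_zero]
  exact eq_zero_of_commute_of_tridiagonal (m := m) (by omega)
    hA.doublePathE_isUnreducedUpperHessenberg
    hA.doublePathE_transpose.doublePathE_isUnreducedUpperHessenberg (sub_eq_zero.mp hcomm)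
    (fun i j hij => hX j i (Or.inr (Or.inl hij.symm)))
    (fun i hi => hX i i (Or.inr (Or.inr ⟨rfl, hL1 i hi⟩)))

/-- if `m` is the maximal integer with `[m] ⊆ L` and `2m > n - 1`,
then the double path `P_{n,L}` requires the nSSP. Vertices are 0-indexed, so the 1-based
initial segment `[m]` is `{i | i.val < m}` and the 1-based vertex `m+1` has `val = m`. -/
theorem double_path_many_initial_loops_requires_nSSP {n m : ℕ} (hmn : m ≤ n)
    (L : Set (Fin n))
    (hL1 : ∀ i : Fin n, i.val < m → i ∈ L)
    (hmax : m = n ∨ ∀ i : Fin n, i.val = m → i ∉ L)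
    (hbig : n - 1 < 2 * m) :
    RequiresNSSP (doublePathE n L) :=
  double_path_many_initial_loops_requires_nSSP_general L hL1 hbig
end

section
/- For every m, n ∈ ℕ with 1 ≤ m ≤ n, the double path P_{n,[m]} on vertex set [n] with loop assignment L = [m] = {1,…,m} requires the nSSP: every matrix A ∈ M(P_{n,[m]}) has the nSSP. -/
open Matrix

private lemma nssp_core (N M : ℤ) (hM1 : 1 ≤ M) (_hMN : M ≤ N)
    (a b d : ℤ → ℝ) (f : ℤ → ℤ → ℝ)
    (ha : ∀ i : ℤ, 0 ≤ i → i + 1 < N → a i ≠ 0)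
    (hb : ∀ i : ℤ, 0 ≤ i → i + 1 < N → b i ≠ 0)
    (hd : ∀ i : ℤ, 0 ≤ i → i < M → d i ≠ 0)
    (hd0 : ∀ i : ℤ, M ≤ i → d i = 0)
    (hrange : ∀ i j : ℤ, i < 0 ∨ N ≤ i ∨ j < 0 ∨ N ≤ j → f i j = 0)
    (hband1 : ∀ i : ℤ, f i (i + 1) = 0)
    (hdg : ∀ i : ℤ, i < M → f i i = 0)
    (hE : ∀ i j : ℤ,
      b (i - 1) * f (i - 1) j + d i * f i j + a i * f (i + 1) j
        = a (j - 1) * f i (j - 1) + d j * f i j + b j * f i (j + 1)) :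
    ∀ i j : ℤ, f i j = 0 := by
  -- Lemma O : odd diagonals vanish on rows ≥ M - 1
  have lemO : ∀ s : ℕ, ∀ i j : ℤ, M - 1 ≤ i → j = i + 2 * (s : ℤ) + 1 → f i j = 0 := by
    intro s
    induction s with
    | zero =>
        intro i j hi hj
        have : j = i + 1 := by omega
        rw [this]; exact hband1 i
    | succ s ih =>
        -- key relation for rows ≥ M
        have key : ∀ i : ℤ, M ≤ i →
            b (i - 1) * f (i - 1) (i + 2 * (s : ℤ) + 2)
              = b (i + 2 * (s : ℤ) + 2) * f i (i + 2 * (s : ℤ) + 3) := by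
          intro i hi
          have h := hE i (i + 2 * (s : ℤ) + 2)
          rw [hd0 i (by omega), hd0 (i + 2 * (s : ℤ) + 2) (by omega)] at h
          have z1 : f (i + 1) (i + 2 * (s : ℤ) + 2) = 0 := ih (i + 1) _ (by omega) (by ring)
          have z2 : f i (i + 2 * (s : ℤ) + 2 - 1) = 0 := ih i _ (by omega) (by ring)
          rw [z1, z2] at h
          have e : i + 2 * (s : ℤ) + 2 + 1 = i + 2 * (s : ℤ) + 3 := by ring
          rw [e] at h
          linear_combination h
        have aux : ∀ t : ℕ, ∀ i : ℤ, M - 1 ≤ i → N - 1 - (t : ℤ) ≤ i →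
            f i (i + 2 * (s : ℤ) + 3) = 0 := by
          intro t
          induction t with
          | zero =>
              intro i _ h2
              exact hrange _ _ (by omega)
          | succ p ihp =>
              intro i h1 h2
              by_cases hc : N - 1 - (p : ℤ) ≤ i
              · exact ihp i h1 hc
              · have hk := key (i + 1) (by omega)
                have e1 : i + 1 - 1 = i := by ring
                have e2 : i + 1 + 2 * (s : ℤ) + 2 = i + 2 * (s : ℤ) + 3 := by ring
                rw [e1, e2] at hk
                have z : f (i + 1) (i + 1 + 2 * (s : ℤ) + 3) = 0 :=
                  ihp (i + 1) (by omega) (by omega)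
                rw [z] at hk
                have hbne : b i ≠ 0 := hb i (by omega) (by push_cast at hc ⊢; omega)
                have : b i * f i (i + 2 * (s : ℤ) + 3) = 0 := by linear_combination hk
                rcases mul_eq_zero.mp this with h' | h'
                · exact absurd h' hbne
                · exact h'
        intro i j hi hj
        have : j = i + 2 * (s : ℤ) + 3 := by push_cast at hj; omega
        rw [this]
        exact aux (N - 1 - i).toNat i hi (by omega)
  -- ascending chain lemma
  have chain : ∀ k : ℤ, 0 ≤ k →
      (∀ i j : ℤ, i ≤ M - 1 → j = i + k → f i j = 0) →
      (∀ i j : ℤ, i ≤ M - 2 → j = i + k + 1 → f i j = 0) →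
      (∀ i j : ℤ, i ≤ M - 2 → j = i + k + 2 → f i j = 0) := by
    intro k hk low mid
    have key : ∀ t : ℤ, t ≤ M - 2 →
        b (t - 1) * f (t - 1) (t + k + 1) = b (t + k + 1) * f t (t + k + 2) := by
      intro t ht
      have h := hE t (t + k + 1)
      have z1 : f t (t + k + 1) = 0 := mid t _ ht rfl
      have z2 : f (t + 1) (t + k + 1) = 0 := low (t + 1) _ (by omega) (by ring)
      have z3 : f t (t + k + 1 - 1) = 0 := low t _ (by omega) (by ring)
      rw [z1, z2, z3] at h
      have e : t + k + 1 + 1 = t + k + 2 := by ring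
      rw [e] at h
      linear_combination h
    have aux : ∀ u : ℕ, (u : ℤ) ≤ M - 2 → f (u : ℤ) ((u : ℤ) + k + 2) = 0 := by
      intro u
      induction u with
      | zero =>
          intro hu
          have hk0 := key 0 hu
          have z : f (0 - 1 : ℤ) (0 + k + 1) = 0 := hrange _ _ (by omega)
          rw [z] at hk0
          by_cases hN : (0 : ℤ) + k + 2 < N
          · have hbne : b (0 + k + 1) ≠ 0 := hb _ (by omega) (by omega)
            have : b (0 + k + 1) * f 0 (0 + k + 2) = 0 := by linear_combination -hk0
            rcases mul_eq_zero.mp this with h' | h'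
            · exact absurd h' hbne
            · exact h'
          · exact hrange _ _ (by omega)
      | succ p ihp =>
          intro hu
          have hkp := key ((p : ℤ) + 1) (by push_cast at hu ⊢; omega)
          have e1 : (p : ℤ) + 1 - 1 = (p : ℤ) := by ring
          rw [e1] at hkp
          have z : f (p : ℤ) ((p : ℤ) + 1 + k + 1) = 0 := by
            have := ihp (by push_cast at hu ⊢; omega)
            have e : (p : ℤ) + 1 + k + 1 = (p : ℤ) + k + 2 := by ring
            rw [e]; exact this
          rw [z] at hkp
          by_cases hN : (p : ℤ) + 1 + k + 2 < N
          · have hbne : b ((p : ℤ) + 1 + k + 1) ≠ 0 := hb _ (by omega) (by omega)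
            have : b ((p : ℤ) + 1 + k + 1) * f ((p : ℤ) + 1) ((p : ℤ) + 1 + k + 2) = 0 := by
              linear_combination -hkp
            have goal : f ((p : ℤ) + 1) ((p : ℤ) + 1 + k + 2) = 0 := by
              rcases mul_eq_zero.mp this with h' | h'
              · exact absurd h' hbne
              · exact h'
            have e : ((p + 1 : ℕ) : ℤ) = (p : ℤ) + 1 := by push_cast; ring
            rw [e]; exact goal
          · exact hrange _ _ (by push_cast; omega)
    intro i j hi hj
    rcases lt_or_ge i 0 with h | h
    · exact hrange i j (by omega)
    · have := aux i.toNat (by omega)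
      have e : ((i.toNat : ℕ) : ℤ) = i := by omega
      rw [e] at this
      rw [hj]; exact this
  -- joint induction on diagonals: all diagonals vanish on rows ≤ M - 1
  have pairQ : ∀ k : ℕ,
      (∀ i j : ℤ, i ≤ M - 1 → j = i + (k : ℤ) → f i j = 0) ∧
      (∀ i j : ℤ, i ≤ M - 1 → j = i + (k : ℤ) + 1 → f i j = 0) := by
    intro k
    induction k with
    | zero =>
        constructor
        · intro i j hi hj
          have : j = i := by omega
          rw [this]; exact hdg i (by omega)
        · intro i j hi hj
          have : j = i + 1 := by omega
          rw [this]; exact hband1 i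
    | succ p ih =>
        obtain ⟨Qp, Qp1⟩ := ih
        have mid : ∀ i j : ℤ, i ≤ M - 2 → j = i + (p : ℤ) + 1 → f i j = 0 :=
          fun i j hi hj => Qp1 i j (by omega) hj
        have partA : ∀ i j : ℤ, i ≤ M - 2 → j = i + (p : ℤ) + 2 → f i j = 0 :=
          chain (p : ℤ) (by omega) Qp mid
        have partA' : ∀ i j : ℤ, i ≤ M - 2 → j = i + (p : ℤ) + 3 → f i j = 0 := by
          have low1 : ∀ i j : ℤ, i ≤ M - 1 → j = i + ((p : ℤ) + 1) → f i j = 0 :=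
            fun i j hi hj => Qp1 i j hi (by omega)
          have mid1 : ∀ i j : ℤ, i ≤ M - 2 → j = i + ((p : ℤ) + 1) + 1 → f i j = 0 :=
            fun i j hi hj => partA i j hi (by omega)
          have := chain ((p : ℤ) + 1) (by omega) low1 mid1
          exact fun i j hi hj => this i j hi (by omega)
        have rowM1 : f (M - 1) (M - 1 + (p : ℤ) + 2) = 0 := by
          rcases Nat.even_or_odd p with ⟨s, hs⟩ | ⟨s, hs⟩
          · -- p = s + s : even; use the loop at M-1 to force
            have h := hE (M - 1) (M - 1 + (p : ℤ) + 2)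
            have z1 : f (M - 1 - 1) (M - 1 + (p : ℤ) + 2) = 0 :=
              partA' (M - 1 - 1) _ (by omega) (by ring)
            have z2 : f (M - 1 + 1) (M - 1 + (p : ℤ) + 2) = 0 :=
              lemO s (M - 1 + 1) _ (by omega) (by push_cast; omega)
            have z3 : f (M - 1) (M - 1 + (p : ℤ) + 2 - 1) = 0 :=
              lemO s (M - 1) _ (by omega) (by push_cast; omega)
            have z4 : f (M - 1) (M - 1 + (p : ℤ) + 2 + 1) = 0 :=
              lemO (s + 1) (M - 1) _ (by omega) (by push_cast; omega)
            have z5 : d (M - 1 + (p : ℤ) + 2) = 0 := hd0 _ (by omega)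
            rw [z1, z2, z3, z4, z5] at h
            have hdne : d (M - 1) ≠ 0 := hd (M - 1) (by omega) (by omega)
            have : d (M - 1) * f (M - 1) (M - 1 + (p : ℤ) + 2) = 0 := by
              linear_combination h
            rcases mul_eq_zero.mp this with h' | h'
            · exact absurd h' hdne
            · exact h'
          · -- p = 2 * s + 1 : odd; diagonal p + 2 is odd
            exact lemO (s + 1) (M - 1) _ (by omega) (by push_cast; omega)
        have Qp2 : ∀ i j : ℤ, i ≤ M - 1 → j = i + (p : ℤ) + 2 → f i j = 0 := by
          intro i j hi hj
          rcases lt_or_eq_of_le hi with h | h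
          · exact partA i j (by omega) hj
          · rw [h] at hj ⊢
            rw [hj]; exact rowM1
        constructor
        · exact fun i j hi hj => Qp1 i j hi (by push_cast at hj; omega)
        · exact fun i j hi hj => Qp2 i j hi (by push_cast at hj; omega)
  -- row 0 vanishes
  have row0 : ∀ j : ℤ, f 0 j = 0 := by
    intro j
    rcases lt_or_ge j 0 with h | h
    · exact hrange 0 j (by omega)
    · exact (pairQ j.toNat).1 0 j (by omega) (by omega)
  -- row 1 vanishes
  have row1 : ∀ j : ℤ, f 1 j = 0 := by
    intro j
    rcases le_or_gt N 1 with hN | hN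
    · exact hrange 1 j (by omega)
    · have h := hE 0 j
      have z0 : f (0 - 1 : ℤ) j = 0 := hrange _ _ (by omega)
      rw [z0, row0 j, row0 (j - 1), row0 (j + 1)] at h
      have hane : a 0 ≠ 0 := ha 0 le_rfl (by omega)
      have : a 0 * f (0 + 1 : ℤ) j = 0 := by linear_combination h
      rcases mul_eq_zero.mp this with h' | h'
      · exact absurd h' hane
      · have e : (0 + 1 : ℤ) = 1 := by ring
        rw [e] at h'; exact h'
  -- all rows vanish by the two-row cascade
  have pairR : ∀ r : ℕ, (∀ j : ℤ, f (r : ℤ) j = 0) ∧ (∀ j : ℤ, f ((r : ℤ) + 1) j = 0) := by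
    intro r
    induction r with
    | zero => exact ⟨by simpa using row0, by simpa using row1⟩
    | succ p ih =>
        obtain ⟨hp, hp1⟩ := ih
        have hnext : ∀ j : ℤ, f ((p : ℤ) + 1 + 1) j = 0 := by
          intro j
          rcases le_or_gt N ((p : ℤ) + 2) with hN | hN
          · exact hrange _ j (by omega)
          · have h := hE ((p : ℤ) + 1) j
            have e1 : (p : ℤ) + 1 - 1 = (p : ℤ) := by ring
            rw [e1] at h
            rw [hp j, hp1 j, hp1 (j - 1), hp1 (j + 1)] at h
            have hane : a ((p : ℤ) + 1) ≠ 0 := ha _ (by omega) (by omega)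
            have : a ((p : ℤ) + 1) * f ((p : ℤ) + 1 + 1) j = 0 := by linear_combination h
            rcases mul_eq_zero.mp this with h' | h'
            · exact absurd h' hane
            · exact h'
        constructor
        · intro j
          have := hp1 j
          have e : ((p + 1 : ℕ) : ℤ) = (p : ℤ) + 1 := by push_cast; ring
          rw [e]; exact this
        · intro j
          have := hnext j
          have e : ((p + 1 : ℕ) : ℤ) = (p : ℤ) + 1 := by push_cast; ring
          rw [e]; exact this
  intro i j
  rcases lt_or_ge i 0 with h | h
  · exact hrange i j (by omega)
  · have := (pairR i.toNat).1 j
    have e : ((i.toNat : ℕ) : ℤ) = i := by omega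
    rw [e] at this
    exact this


private lemma sum_ite_int (n : ℕ) (x : ℤ) (v : ℝ) :
    (∑ k ∈ Finset.range n, if ((k : ℕ) : ℤ) = x then v else 0)
      = if 0 ≤ x ∧ x < (n : ℤ) then v else 0 := by
  induction n with
  | zero =>
      rw [Finset.range_zero, Finset.sum_empty, if_neg (by omega)]
  | succ k ih =>
      rw [Finset.sum_range_succ, ih]
      by_cases hx : ((k : ℕ) : ℤ) = x
      · rw [if_pos hx, if_neg (by omega), if_pos (by omega), zero_add]
      · rw [if_neg hx, add_zero]
        by_cases h2 : 0 ≤ x ∧ x < (k : ℤ)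
        · rw [if_pos h2, if_pos (by omega)]
        · rw [if_neg h2, if_neg (by omega)]

/-- extension of a matrix to `ℤ × ℤ`, zero outside the index range -/
private def extM {n : ℕ} (A : Matrix (Fin n) (Fin n) ℝ) : ℤ → ℤ → ℝ := fun i j =>
  if h : 0 ≤ i ∧ i < (n : ℤ) ∧ 0 ≤ j ∧ j < (n : ℤ) then
    A ⟨i.toNat, by omega⟩ ⟨j.toNat, by omega⟩ else 0

private lemma extM_fin {n : ℕ} (A : Matrix (Fin n) (Fin n) ℝ) (p q : Fin n) :
    extM A ((p : ℕ) : ℤ) ((q : ℕ) : ℤ) = A p q := by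
  have hp := p.is_lt
  have hq := q.is_lt
  unfold extM
  rw [dif_pos ⟨by omega, by omega, by omega, by omega⟩]
  congr 1 <;> exact Fin.ext (by simp)

private lemma extM_out {n : ℕ} (A : Matrix (Fin n) (Fin n) ℝ) {i j : ℤ}
    (h : ¬(0 ≤ i ∧ i < (n : ℤ) ∧ 0 ≤ j ∧ j < (n : ℤ))) : extM A i j = 0 :=
  dif_neg h

private lemma mul_apply_tri {n : ℕ} (A B : Matrix (Fin n) (Fin n) ℝ)
    (hA : ∀ p q : Fin n, 2 ≤ (((p : ℕ) : ℤ) - ((q : ℕ) : ℤ)).natAbs → A p q = 0)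
    (p q : Fin n) :
    (A * B) p q
      = extM A ((p : ℕ) : ℤ) (((p : ℕ) : ℤ) - 1) * extM B (((p : ℕ) : ℤ) - 1) ((q : ℕ) : ℤ)
      + extM A ((p : ℕ) : ℤ) ((p : ℕ) : ℤ) * extM B ((p : ℕ) : ℤ) ((q : ℕ) : ℤ)
      + extM A ((p : ℕ) : ℤ) (((p : ℕ) : ℤ) + 1) * extM B (((p : ℕ) : ℤ) + 1) ((q : ℕ) : ℤ) := by
  have hp := p.is_lt
  rw [Matrix.mul_apply]
  have hpt : ∀ k : Fin n, A p k * B k q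
      = (if ((k : ℕ) : ℤ) = ((p : ℕ) : ℤ) - 1 then
          extM A ((p : ℕ) : ℤ) (((p : ℕ) : ℤ) - 1) * extM B (((p : ℕ) : ℤ) - 1) ((q : ℕ) : ℤ) else 0)
      + (if ((k : ℕ) : ℤ) = ((p : ℕ) : ℤ) then
          extM A ((p : ℕ) : ℤ) ((p : ℕ) : ℤ) * extM B ((p : ℕ) : ℤ) ((q : ℕ) : ℤ) else 0)
      + (if ((k : ℕ) : ℤ) = ((p : ℕ) : ℤ) + 1 then
          extM A ((p : ℕ) : ℤ) (((p : ℕ) : ℤ) + 1) * extM B (((p : ℕ) : ℤ) + 1) ((q : ℕ) : ℤ) else 0) := by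
    intro k
    by_cases h1 : ((k : ℕ) : ℤ) = ((p : ℕ) : ℤ) - 1
    · rw [if_pos h1, if_neg (by omega), if_neg (by omega), add_zero, add_zero,
        ← h1, extM_fin, extM_fin]
    · by_cases h2 : ((k : ℕ) : ℤ) = ((p : ℕ) : ℤ)
      · have hpq : p = k := Fin.ext (by omega)
        rw [if_neg h1, if_pos h2, if_neg (by omega), zero_add, add_zero, ← h2, extM_fin, extM_fin,
          hpq]
      · by_cases h3 : ((k : ℕ) : ℤ) = ((p : ℕ) : ℤ) + 1
        · rw [if_neg h1, if_neg h2, if_pos h3, zero_add, zero_add, ← h3, extM_fin, extM_fin]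
        · rw [if_neg h1, if_neg h2, if_neg h3, hA p k (by omega), zero_mul]
          ring
  rw [Finset.sum_congr rfl (fun k _ => hpt k), Finset.sum_add_distrib, Finset.sum_add_distrib]
  have S : ∀ (x : ℤ) (v : ℝ), (∑ k : Fin n, if ((k : ℕ) : ℤ) = x then v else 0)
      = if 0 ≤ x ∧ x < (n : ℤ) then v else 0 := by
    intro x v
    rw [Fin.sum_univ_eq_sum_range (fun t : ℕ => if ((t : ℕ) : ℤ) = x then v else 0) n]
    exact sum_ite_int n x v
  rw [S, S, S]
  have T2 : (if 0 ≤ ((p : ℕ) : ℤ) ∧ ((p : ℕ) : ℤ) < (n : ℤ) then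
      extM A ((p : ℕ) : ℤ) ((p : ℕ) : ℤ) * extM B ((p : ℕ) : ℤ) ((q : ℕ) : ℤ) else 0)
      = extM A ((p : ℕ) : ℤ) ((p : ℕ) : ℤ) * extM B ((p : ℕ) : ℤ) ((q : ℕ) : ℤ) :=
    if_pos ⟨by omega, by omega⟩
  have T1 : (if 0 ≤ ((p : ℕ) : ℤ) - 1 ∧ ((p : ℕ) : ℤ) - 1 < (n : ℤ) then
      extM A ((p : ℕ) : ℤ) (((p : ℕ) : ℤ) - 1) * extM B (((p : ℕ) : ℤ) - 1) ((q : ℕ) : ℤ) else 0)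
      = extM A ((p : ℕ) : ℤ) (((p : ℕ) : ℤ) - 1) * extM B (((p : ℕ) : ℤ) - 1) ((q : ℕ) : ℤ) := by
    by_cases h : 0 ≤ ((p : ℕ) : ℤ) - 1 ∧ ((p : ℕ) : ℤ) - 1 < (n : ℤ)
    · rw [if_pos h]
    · rw [if_neg h, extM_out A (by omega), zero_mul]
  have T3 : (if 0 ≤ ((p : ℕ) : ℤ) + 1 ∧ ((p : ℕ) : ℤ) + 1 < (n : ℤ) then
      extM A ((p : ℕ) : ℤ) (((p : ℕ) : ℤ) + 1) * extM B (((p : ℕ) : ℤ) + 1) ((q : ℕ) : ℤ) else 0)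
      = extM A ((p : ℕ) : ℤ) (((p : ℕ) : ℤ) + 1) * extM B (((p : ℕ) : ℤ) + 1) ((q : ℕ) : ℤ) := by
    by_cases h : 0 ≤ ((p : ℕ) : ℤ) + 1 ∧ ((p : ℕ) : ℤ) + 1 < (n : ℤ)
    · rw [if_pos h]
    · rw [if_neg h, extM_out A (by omega), zero_mul]
  rw [T1, T2, T3]

private lemma mul_apply_tri' {n : ℕ} (A B : Matrix (Fin n) (Fin n) ℝ)
    (hA : ∀ p q : Fin n, 2 ≤ (((p : ℕ) : ℤ) - ((q : ℕ) : ℤ)).natAbs → A p q = 0)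
    (p q : Fin n) :
    (B * A) p q
      = extM B ((p : ℕ) : ℤ) (((q : ℕ) : ℤ) - 1) * extM A (((q : ℕ) : ℤ) - 1) ((q : ℕ) : ℤ)
      + extM B ((p : ℕ) : ℤ) ((q : ℕ) : ℤ) * extM A ((q : ℕ) : ℤ) ((q : ℕ) : ℤ)
      + extM B ((p : ℕ) : ℤ) (((q : ℕ) : ℤ) + 1) * extM A (((q : ℕ) : ℤ) + 1) ((q : ℕ) : ℤ) := by
  have hq := q.is_lt
  rw [Matrix.mul_apply]
  have hpt : ∀ k : Fin n, B p k * A k q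
      = (if ((k : ℕ) : ℤ) = ((q : ℕ) : ℤ) - 1 then
          extM B ((p : ℕ) : ℤ) (((q : ℕ) : ℤ) - 1) * extM A (((q : ℕ) : ℤ) - 1) ((q : ℕ) : ℤ) else 0)
      + (if ((k : ℕ) : ℤ) = ((q : ℕ) : ℤ) then
          extM B ((p : ℕ) : ℤ) ((q : ℕ) : ℤ) * extM A ((q : ℕ) : ℤ) ((q : ℕ) : ℤ) else 0)
      + (if ((k : ℕ) : ℤ) = ((q : ℕ) : ℤ) + 1 then
          extM B ((p : ℕ) : ℤ) (((q : ℕ) : ℤ) + 1) * extM A (((q : ℕ) : ℤ) + 1) ((q : ℕ) : ℤ) else 0) := by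
    intro k
    by_cases h1 : ((k : ℕ) : ℤ) = ((q : ℕ) : ℤ) - 1
    · rw [if_pos h1, if_neg (by omega), if_neg (by omega), add_zero, add_zero,
        ← h1, extM_fin, extM_fin]
    · by_cases h2 : ((k : ℕ) : ℤ) = ((q : ℕ) : ℤ)
      · have hpq : q = k := Fin.ext (by omega)
        rw [if_neg h1, if_pos h2, if_neg (by omega), zero_add, add_zero, ← h2, extM_fin, extM_fin,
          hpq]
      · by_cases h3 : ((k : ℕ) : ℤ) = ((q : ℕ) : ℤ) + 1
        · rw [if_neg h1, if_neg h2, if_pos h3, zero_add, zero_add, ← h3, extM_fin, extM_fin]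
        · rw [if_neg h1, if_neg h2, if_neg h3, hA k q (by omega), mul_zero]
          ring
  rw [Finset.sum_congr rfl (fun k _ => hpt k), Finset.sum_add_distrib, Finset.sum_add_distrib]
  have S : ∀ (x : ℤ) (v : ℝ), (∑ k : Fin n, if ((k : ℕ) : ℤ) = x then v else 0)
      = if 0 ≤ x ∧ x < (n : ℤ) then v else 0 := by
    intro x v
    rw [Fin.sum_univ_eq_sum_range (fun t : ℕ => if ((t : ℕ) : ℤ) = x then v else 0) n]
    exact sum_ite_int n x v
  rw [S, S, S]
  have T2 : (if 0 ≤ ((q : ℕ) : ℤ) ∧ ((q : ℕ) : ℤ) < (n : ℤ) then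
      extM B ((p : ℕ) : ℤ) ((q : ℕ) : ℤ) * extM A ((q : ℕ) : ℤ) ((q : ℕ) : ℤ) else 0)
      = extM B ((p : ℕ) : ℤ) ((q : ℕ) : ℤ) * extM A ((q : ℕ) : ℤ) ((q : ℕ) : ℤ) :=
    if_pos ⟨by omega, by omega⟩
  have T1 : (if 0 ≤ ((q : ℕ) : ℤ) - 1 ∧ ((q : ℕ) : ℤ) - 1 < (n : ℤ) then
      extM B ((p : ℕ) : ℤ) (((q : ℕ) : ℤ) - 1) * extM A (((q : ℕ) : ℤ) - 1) ((q : ℕ) : ℤ) else 0)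
      = extM B ((p : ℕ) : ℤ) (((q : ℕ) : ℤ) - 1) * extM A (((q : ℕ) : ℤ) - 1) ((q : ℕ) : ℤ) := by
    by_cases h : 0 ≤ ((q : ℕ) : ℤ) - 1 ∧ ((q : ℕ) : ℤ) - 1 < (n : ℤ)
    · rw [if_pos h]
    · rw [if_neg h, extM_out B (by omega), zero_mul]
  have T3 : (if 0 ≤ ((q : ℕ) : ℤ) + 1 ∧ ((q : ℕ) : ℤ) + 1 < (n : ℤ) then
      extM B ((p : ℕ) : ℤ) (((q : ℕ) : ℤ) + 1) * extM A (((q : ℕ) : ℤ) + 1) ((q : ℕ) : ℤ) else 0)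
      = extM B ((p : ℕ) : ℤ) (((q : ℕ) : ℤ) + 1) * extM A (((q : ℕ) : ℤ) + 1) ((q : ℕ) : ℤ) := by
    by_cases h : 0 ≤ ((q : ℕ) : ℤ) + 1 ∧ ((q : ℕ) : ℤ) + 1 < (n : ℤ)
    · rw [if_pos h]
    · rw [if_neg h, extM_out B (by omega), zero_mul]
  rw [T1, T2, T3]

/-- for all `1 ≤ m ≤ n`, the double path with loops exactly on the first `m`
vertices (1-based `[m]`, i.e. 0-based indices `< m`) requires the nSSP. -/
theorem double_path_first_m_loops_requires_nSSP {n m : ℕ} (hm : 1 ≤ m) (hmn : m ≤ n) :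
    RequiresNSSP (doublePathE n {i : Fin n | i.val < m}) := by
  intro A hA X hX hcomm
  have hAY : A * Xᵀ = Xᵀ * A := sub_eq_zero.mp hcomm
  have htri : ∀ p q : Fin n, 2 ≤ (((p : ℕ) : ℤ) - ((q : ℕ) : ℤ)).natAbs → A p q = 0 := by
    intro p q h
    by_contra h'
    have hm' := (hA p q).mp h'
    simp only [doublePathE, Set.mem_setOf_eq] at hm'
    rcases hm' with h1 | h1 | ⟨h1, _⟩
    · omega
    · omega
    · rw [h1] at h; omega
  have hXz : ∀ p q : Fin n, (p, q) ∈ doublePathE n {i : Fin n | i.val < m} → X p q = 0 := by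
    intro p q hmem
    have hne : A p q ≠ 0 := (hA p q).mpr hmem
    rcases mul_eq_zero.mp (hX p q) with h' | h'
    · exact absurd h' hne
    · exact h'
  have Hrange : ∀ i j : ℤ, i < 0 ∨ (n : ℤ) ≤ i ∨ j < 0 ∨ (n : ℤ) ≤ j → extM Xᵀ i j = 0 :=
    fun i j h => extM_out _ (by omega)
  have Ha : ∀ i : ℤ, 0 ≤ i → i + 1 < (n : ℤ) → extM A i (i + 1) ≠ 0 := by
    intro i h0 h1
    have e : extM A i (i + 1) = A ⟨i.toNat, by omega⟩ ⟨(i + 1).toNat, by omega⟩ := by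
      unfold extM; rw [dif_pos ⟨h0, by omega, by omega, by omega⟩]
    rw [e]
    apply (hA _ _).mpr
    simp only [doublePathE, Set.mem_setOf_eq]
    left
    show i.toNat + 1 = (i + 1).toNat
    omega
  have Hb : ∀ i : ℤ, 0 ≤ i → i + 1 < (n : ℤ) → extM A (i + 1) i ≠ 0 := by
    intro i h0 h1
    have e : extM A (i + 1) i = A ⟨(i + 1).toNat, by omega⟩ ⟨i.toNat, by omega⟩ := by
      unfold extM; rw [dif_pos ⟨by omega, by omega, h0, by omega⟩]
    rw [e]
    apply (hA _ _).mpr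
    simp only [doublePathE, Set.mem_setOf_eq]
    right; left
    show i.toNat + 1 = (i + 1).toNat
    omega
  have Hd : ∀ i : ℤ, 0 ≤ i → i < (m : ℤ) → extM A i i ≠ 0 := by
    intro i h0 h1
    have e : extM A i i = A ⟨i.toNat, by omega⟩ ⟨i.toNat, by omega⟩ := by
      unfold extM; rw [dif_pos ⟨h0, by omega, h0, by omega⟩]
    rw [e]
    apply (hA _ _).mpr
    simp only [doublePathE, Set.mem_setOf_eq]
    right; right
    exact ⟨by trivial, by show i.toNat < m; omega⟩
  have Hd0 : ∀ i : ℤ, (m : ℤ) ≤ i → extM A i i = 0 := by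
    intro i hi
    by_cases h : 0 ≤ i ∧ i < (n : ℤ) ∧ 0 ≤ i ∧ i < (n : ℤ)
    · have e : extM A i i = A ⟨i.toNat, by omega⟩ ⟨i.toNat, by omega⟩ := by
        unfold extM; rw [dif_pos h]
      rw [e]
      by_contra h'
      have hm' := (hA _ _).mp h'
      simp only [doublePathE, Set.mem_setOf_eq] at hm'
      rcases hm' with h1 | h1 | ⟨_, h1⟩
      · revert h1; show i.toNat + 1 = i.toNat → False; omega
      · revert h1; show i.toNat + 1 = i.toNat → False; omega
      · revert h1; show i.toNat < m → False; omega
    · exact extM_out _ h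
  have Hband1 : ∀ i : ℤ, extM Xᵀ i (i + 1) = 0 := by
    intro i
    by_cases h : 0 ≤ i ∧ i < (n : ℤ) ∧ 0 ≤ i + 1 ∧ i + 1 < (n : ℤ)
    · have e : extM Xᵀ i (i + 1) = Xᵀ ⟨i.toNat, by omega⟩ ⟨(i + 1).toNat, by omega⟩ := by
        unfold extM; rw [dif_pos h]
      rw [e, Matrix.transpose_apply]
      apply hXz
      simp only [doublePathE, Set.mem_setOf_eq]
      right; left
      show i.toNat + 1 = (i + 1).toNat
      omega
    · exact extM_out _ h
  have Hdg : ∀ i : ℤ, i < (m : ℤ) → extM Xᵀ i i = 0 := by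
    intro i hi
    by_cases h : 0 ≤ i ∧ i < (n : ℤ) ∧ 0 ≤ i ∧ i < (n : ℤ)
    · have e : extM Xᵀ i i = Xᵀ ⟨i.toNat, by omega⟩ ⟨i.toNat, by omega⟩ := by
        unfold extM; rw [dif_pos h]
      rw [e, Matrix.transpose_apply]
      apply hXz
      simp only [doublePathE, Set.mem_setOf_eq]
      right; right
      exact ⟨by trivial, by show i.toNat < m; omega⟩
    · exact extM_out _ h
  have HE : ∀ i j : ℤ,
      extM A (i - 1 + 1) (i - 1) * extM Xᵀ (i - 1) j + extM A i i * extM Xᵀ i j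
        + extM A i (i + 1) * extM Xᵀ (i + 1) j
      = extM A (j - 1) (j - 1 + 1) * extM Xᵀ i (j - 1) + extM A j j * extM Xᵀ i j
        + extM A (j + 1) j * extM Xᵀ i (j + 1) := by
    intro i j
    have e1 : i - 1 + 1 = i := by ring
    have e2 : j - 1 + 1 = j := by ring
    rw [e1, e2]
    by_cases hir : 0 ≤ i ∧ i < (n : ℤ)
    · by_cases hjr : 0 ≤ j ∧ j < (n : ℤ)
      · set p : Fin n := ⟨i.toNat, by omega⟩ with hp
        set q : Fin n := ⟨j.toNat, by omega⟩ with hq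
        have h0 : (A * Xᵀ) p q = (Xᵀ * A) p q := by rw [hAY]
        rw [mul_apply_tri A Xᵀ htri p q, mul_apply_tri' A Xᵀ htri p q] at h0
        have ei : ((p : ℕ) : ℤ) = i := by
          have : (p : ℕ) = i.toNat := rfl
          omega
        have ej : ((q : ℕ) : ℤ) = j := by
          have : (q : ℕ) = j.toNat := rfl
          omega
        rw [ei, ej] at h0
        linear_combination h0
      · have c1 : extM Xᵀ (i - 1) j = 0 := extM_out _ (by omega)
        have c2 : extM Xᵀ i j = 0 := extM_out _ (by omega)
        have c3 : extM Xᵀ (i + 1) j = 0 := extM_out _ (by omega)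
        have c4 : extM A (j - 1) j = 0 := extM_out _ (by omega)
        have c5 : extM A j j = 0 := extM_out _ (by omega)
        have c6 : extM A (j + 1) j = 0 := extM_out _ (by omega)
        rw [c1, c2, c3, c4, c5, c6]
        ring
    · have c1 : extM A i (i - 1) = 0 := extM_out _ (by omega)
      have c2 : extM A i i = 0 := extM_out _ (by omega)
      have c3 : extM A i (i + 1) = 0 := extM_out _ (by omega)
      have c4 : extM Xᵀ i (j - 1) = 0 := extM_out _ (by omega)
      have c5 : extM Xᵀ i j = 0 := extM_out _ (by omega)
      have c6 : extM Xᵀ i (j + 1) = 0 := extM_out _ (by omega)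
      rw [c1, c2, c3, c4, c5, c6]
      ring
  have hall : ∀ i j : ℤ, extM Xᵀ i j = 0 :=
    nssp_core (n : ℤ) (m : ℤ) (by omega) (by omega)
      (fun t => extM A t (t + 1)) (fun t => extM A (t + 1) t) (fun t => extM A t t) (extM Xᵀ)
      Ha Hb Hd Hd0 Hrange Hband1 Hdg HE
  ext p q
  have h := hall ((q : ℕ) : ℤ) ((p : ℕ) : ℤ)
  rw [extM_fin] at h
  simpa using h
end
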